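/- arXiv:1409.1100 — 4 statements merged into one kernel-verified Lean document; each statement's English description precedes it below -/
import Mathlib

section
/- Let (V, Ω, q) be a k-symplectic complex vector space: V has dimension 4n, Ω ⊂ Λ²V* has dimension k, q is a quadratic form on Ω, every nonzero ω ∈ Ω with q(ω,ω) = 0 has 2n-dimensional kernel, and every ω ∈ Ω with q(ω,ω) ≠ 0 is nondegenerate. If q is nondegenerate and k ≥ 2, then V carries the structure of a nontrivial module over the even Clifford algebra Cl⁰(Ω, q). -/
/-!
Choose `e ∈ Ω` with `q e = -1`. Then `emb e : V → V*` is invertible, and `A ω := (emb e)⁻¹ ∘ emb ω`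
is linear in `ω`. If `ω ⊥ e` and `q ω = s² ≠ 0`, the forms `ω ± s e` are isotropic, so their
`2n`-dimensional kernels are the `∓s`-eigenspaces of `A ω`; these fill `V`, whence `A ω² = q ω`.
This extends to isotropic `ω ⊥ e` because a quadratic map vanishing on `x + u τ` for all `u ≠ 0`,
with `(x, τ)` a hyperbolic pair in `e^⊥`, vanishes at `x`. Finally, with `m = P m + σ m • e` the
decomposition along `e^⊥ ⊕ ℂe`, the pairing `(m₁, m₂) ↦ (A (P m₁) + σ m₁)(A (P m₂) - σ m₂)`
satisfies the relations of the even Clifford algebra.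
-/

open Module LinearMap

theorem Module.End.mul_self_eq_of_finrank_le {K V : Type*} [Field K] [AddCommGroup V]
    [Module K V] [FiniteDimensional K V] (X : End K V) {s : K} (hs : s ≠ -s)
    (hdim : finrank K V ≤ finrank K (X.eigenspace s) + finrank K (X.eigenspace (-s))) :
    X * X = s ^ 2 • 1 := by
  have htop := Submodule.eq_top_of_disjoint _ _ hdim (X.disjoint_genEigenspace hs 1 1)
  have hle : X.eigenspace s ⊔ X.eigenspace (-s) ≤ eqLocus (X * X) (s ^ 2 • 1) := by
    refine sup_le (fun v hv => ?_) (fun v hv => ?_) <;>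
    · rw [mem_eigenspace_iff] at hv
      simp [mem_eqLocus, hv, smul_smul, pow_two]
  ext v
  exact hle (htop ▸ Submodule.mem_top)

namespace CliffordAlgebra

open QuadraticMap

variable {R M B : Type*} [CommRing R] [AddCommGroup M] [Module R M] [Ring B] [Algebra R B]
  {Q : QuadraticForm R M}

def EvenHom.ofMul (g h : M →ₗ[R] B) (hgh : ∀ m, g m * h m = algebraMap R B (Q m))
    (hhg : ∀ m, h m * g m = algebraMap R B (Q m)) : EvenHom Q B where
  bilin := (LinearMap.mul R B).compl₁₂ g h
  contract m := hgh m
  contract_mid m₁ m₂ m₃ := by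
    simp only [compl₁₂_apply, mul_apply']
    rw [mul_assoc, ← mul_assoc (h m₂), hhg, Algebra.algebraMap_eq_smul_one, smul_mul_assoc,
      one_mul, mul_smul_comm]

theorem nonempty_evenAlgHom_of_mul_self_eq [Invertible (2 : R)] {e : M} (he : Q e = -1)
    (A : M →ₗ[R] B) (hA : ∀ x, polar Q e x = 0 → A x * A x = algebraMap R B (Q x)) :
    Nonempty (even Q →ₐ[R] B) := by
  let σ : M →ₗ[R] R := -(⅟2 : R) • polarBilin Q e
  let P : M →ₗ[R] M := LinearMap.id - toSpanSingleton R M e ∘ₗ σ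
  have hσ (m : M) : σ m = -(⅟2 : R) * polar Q e m := rfl
  have hP (m : M) : P m = m - σ m • e := rfl
  have hPe (m : M) : polar Q e (P m) = 0 := by
    rw [hP, polar_sub_right, polar_smul_right, polar_self, he, hσ, smul_eq_mul, nsmul_eq_mul]
    linear_combination (-polar Q e m) * invOf_mul_self (2 : R)
  have hQ (m : M) : Q m = Q (P m) - σ m ^ 2 := by
    conv_lhs => rw [show m = P m + σ m • e by rw [hP]; abel]
    rw [QuadraticMap.map_add Q, QuadraticMap.map_smul, he, polar_smul_right, polar_comm, hPe]
    simp only [smul_eq_mul]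
    ring
  let g : M →ₗ[R] B := A ∘ₗ P + Algebra.linearMap R B ∘ₗ σ
  let h : M →ₗ[R] B := A ∘ₗ P - Algebra.linearMap R B ∘ₗ σ
  have hg (m : M) : g m = A (P m) + algebraMap R B (σ m) := rfl
  have hh (m : M) : h m = A (P m) - algebraMap R B (σ m) := rfl
  have hgh (m : M) : g m * h m = algebraMap R B (Q m) := by
    rw [hg, hh, add_mul, mul_sub, mul_sub, hA _ (hPe m), Algebra.commutes, hQ m, map_sub, map_pow,
      pow_two]
    abel
  have hhg (m : M) : h m * g m = algebraMap R B (Q m) := by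
    rw [hg, hh, sub_mul, mul_add, mul_add, hA _ (hPe m), Algebra.commutes, hQ m, map_sub, map_pow,
      pow_two]
    abel
  exact ⟨even.lift Q (EvenHom.ofMul g h hgh hhg)⟩

end CliffordAlgebra

namespace QuadraticMap

variable {K M N : Type*} [Field K] [AddCommGroup M] [Module K M]

theorem exists_mem_isotropic_polar_eq_one {Q : QuadraticForm K M} {W : Submodule K M} {x y : M}
    (hxW : x ∈ W) (hyW : y ∈ W) (hx : Q x = 0) (hxy : polar Q x y ≠ 0) :
    ∃ τ ∈ W, Q τ = 0 ∧ polar Q x τ = 1 := by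
  set p := polar Q x y
  refine ⟨p⁻¹ • y + (-(Q y / p ^ 2)) • x,
    W.add_mem (W.smul_mem _ hyW) (W.smul_mem _ hxW), ?_, ?_⟩
  · rw [QuadraticMap.map_add Q, Q.map_smul, Q.map_smul, hx, polar_smul_left, polar_smul_right,
      polar_comm, smul_eq_mul, smul_eq_mul, smul_eq_mul, smul_eq_mul]
    field_simp
    ring
  · rw [polar_add_right, polar_smul_right, polar_smul_right, polar_self, hx, smul_zero,
      smul_zero, add_zero, smul_eq_mul]
    exact inv_mul_cancel₀ hxy

theorem exists_orthogonal_polar_ne_zero [NeZero (2 : K)] {Q : QuadraticForm K M}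
    (hQ : (polarBilin Q).SeparatingLeft) {e x : M} (he : Q e ≠ 0) (hx : polar Q e x = 0)
    (hx0 : x ≠ 0) : ∃ y, polar Q e y = 0 ∧ polar Q x y ≠ 0 := by
  obtain ⟨y, hy⟩ : ∃ y, polar Q x y ≠ 0 := by
    by_contra! h
    exact hx0 (hQ x h)
  have hee : polar Q e e ≠ 0 := by
    rw [polar_self, nsmul_eq_mul]
    exact mul_ne_zero two_ne_zero he
  refine ⟨y - (polar Q e y / polar Q e e) • e, ?_, ?_⟩
  · rw [polar_sub_right, polar_smul_right, smul_eq_mul, div_mul_cancel₀ _ hee, sub_self]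
  · rwa [polar_sub_right, polar_smul_right, polar_comm Q x e, hx, smul_zero, sub_zero]

variable [CharZero K] [AddCommGroup N] [Module K N]

theorem eq_zero_of_forall_add_smul_eq_zero (F : QuadraticMap K M N)
    (x y : M) (h : ∀ u : K, u ≠ 0 → F (x + u • y) = 0) : F x = 0 := by
  have hF (u : K) : F (x + u • y) = F x + (u * u) • F y + u • polar F x y := by
    rw [QuadraticMap.map_add F, F.map_smul, polar_smul_right]
  have h₁ := (hF 1).symm.trans (h 1 one_ne_zero)
  have h₂ := (hF (-1)).symm.trans (h (-1) (by norm_num))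
  have h₃ := (hF 2).symm.trans (h 2 two_ne_zero)
  have h₄ := (hF (-2)).symm.trans (h (-2) (by norm_num))
  linear_combination (norm := module) (6 : K)⁻¹ • (4 • h₁ + 4 • h₂ - h₃ - h₄)

theorem eq_zero_of_polar_eq_zero_of_forall_anisotropic {Q : QuadraticForm K M}
    (hQ : (polarBilin Q).SeparatingLeft) {e : M} (he : Q e ≠ 0) (F : QuadraticMap K M N)
    (hF : ∀ z, polar Q e z = 0 → Q z ≠ 0 → F z = 0) {x : M} (hx : polar Q e x = 0) :
    F x = 0 := by
  by_cases hQx : Q x ≠ 0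
  · exact hF x hx hQx
  rw [not_not] at hQx
  rcases eq_or_ne x 0 with rfl | hx0
  · exact F.map_zero
  obtain ⟨y, hy, hxy⟩ := exists_orthogonal_polar_ne_zero hQ he hx hx0
  obtain ⟨τ, hτ, hQτ, hxτ⟩ := exists_mem_isotropic_polar_eq_one (W := ker (polarBilin Q e))
    hx hy hQx hxy
  refine eq_zero_of_forall_add_smul_eq_zero F x τ fun u hu => hF _ ?_ ?_
  · rw [polar_add_right, polar_smul_right, hx, ← polarBilin_apply_apply, hτ, smul_zero, add_zero]
  · rwa [QuadraticMap.map_add Q, Q.map_smul, polar_smul_right, hQx, hQτ, hxτ, smul_zero, zero_add,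
      zero_add, smul_eq_mul, mul_one]

end QuadraticMap

theorem LinearMap.ker_add_smul_eq_eigenspace {K Ω V W : Type*} [CommRing K] [AddCommGroup Ω]
    [Module K Ω] [AddCommGroup V] [Module K V] [AddCommGroup W] [Module K W]
    (B : Ω →ₗ[K] V →ₗ[K] W) {e : Ω} (he : ker (B e) = ⊥) (A : Ω →ₗ[K] End K V)
    (hA : ∀ ω, B ω = B e ∘ₗ A ω) (x : Ω) (t : K) :
    ker (B (x + t • e)) = (A x).eigenspace (-t) := by
  have hB : B (x + t • e) = B e ∘ₗ (A x + t • 1) := by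
    rw [map_add, map_smul, hA x, comp_add, comp_smul, Module.End.one_eq_id, comp_id]
  rw [hB, ker_comp_of_ker_eq_bot _ he, Module.End.eigenspace_def, neg_smul, sub_neg_eq_add]

open QuadraticMap in
theorem mul_self_eq_smul_one_of_anisotropic {V Ω : Type*} [AddCommGroup V] [Module ℂ V]
    [FiniteDimensional ℂ V] [AddCommGroup Ω] [Module ℂ Ω] {n : ℕ} {q : QuadraticForm ℂ Ω}
    {emb : Ω →ₗ[ℂ] LinearMap.BilinForm ℂ V} (hdim : finrank ℂ V = 4 * n)
    (hiso : ∀ ω, ω ≠ 0 → q ω = 0 → finrank ℂ (ker (emb ω)) = 2 * n)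
    {e : Ω} (he : q e = -1) (hker : ker (emb e) = ⊥) (A : Ω →ₗ[ℂ] End ℂ V)
    (hA : ∀ ω, emb ω = emb e ∘ₗ A ω) {x : Ω} (hx : polar q e x = 0) (hqx : q x ≠ 0) :
    A x * A x = q x • 1 := by
  obtain ⟨s, hs⟩ := IsAlgClosed.exists_pow_nat_eq (q x) two_pos
  have hs0 : s ≠ 0 := by
    rintro rfl
    exact hqx (by rw [← hs, zero_pow two_ne_zero])
  have hfin (t : ℂ) (ht : t ^ 2 = q x) : finrank ℂ ((A x).eigenspace (-t)) = 2 * n := by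
    have ht0 : t ≠ 0 := by
      rintro rfl
      exact hqx (by rw [← ht, zero_pow two_ne_zero])
    rw [← ker_add_smul_eq_eigenspace emb hker A hA]
    refine hiso _ (fun h0 => ht0 ?_) ?_
    · have h := congrArg (polar q e) h0
      rw [polar_add_right, polar_smul_right, polar_self, he, hx, polar_zero_right] at h
      simpa using h
    · rw [QuadraticMap.map_add q, q.map_smul, he, polar_smul_right, polar_comm, hx, ← ht]
      simp only [smul_eq_mul]
      ring
  have hplus := hfin s hs
  have hminus := hfin (-s) (by rw [neg_sq, hs])
  rw [neg_neg] at hminus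
  have hsq := (A x).mul_self_eq_of_finrank_le (s := s) (fun h => hs0 (self_eq_neg.mp h))
    (by rw [hminus, hplus, hdim]; omega)
  rw [hsq, hs]

theorem stmt3_general (V : Type*) [AddCommGroup V] [Module ℂ V] [FiniteDimensional ℂ V]
    (Ω : Type*) [AddCommGroup Ω] [Module ℂ Ω]
    (n : ℕ) (hdim : finrank ℂ V = 4 * n)
    (emb : Ω →ₗ[ℂ] LinearMap.BilinForm ℂ V)
    (q : QuadraticForm ℂ Ω)
    (hdich : ∀ ω : Ω, ω ≠ 0 →
      (q ω = 0 → finrank ℂ (LinearMap.ker (emb ω)) = 2 * n) ∧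
      (q ω ≠ 0 → LinearMap.ker (emb ω) = ⊥))
    (hqnd : ∀ x : Ω, (∀ y : Ω, QuadraticMap.polar q x y = 0) → x = 0) :
    Nonempty (↥(CliffordAlgebra.even q) →ₐ[ℂ] Module.End ℂ V) := by
  by_cases hq : ∀ ω, q ω = 0
  · exact ⟨CliffordAlgebra.even.lift q ⟨0, fun ω => by simp [hq ω], fun _ _ _ => by simp⟩⟩
  obtain ⟨e, he⟩ : ∃ e, q e = -1 := by
    obtain ⟨ω₀, hω₀⟩ := not_forall.mp hq
    obtain ⟨c, hc⟩ := IsAlgClosed.exists_pow_nat_eq (-(q ω₀)⁻¹) two_pos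
    exact ⟨c • ω₀, by rw [q.map_smul, ← sq, hc, smul_eq_mul, neg_mul, inv_mul_cancel₀ hω₀]⟩
  have hker : ker (emb e) = ⊥ :=
    (hdich e fun h => by simp [h] at he).2 (by simp [he])
  let T := LinearEquiv.ofInjectiveOfFinrankEq (emb e) (ker_eq_bot.mp hker)
    Subspace.dual_finrank_eq.symm
  let A : Ω →ₗ[ℂ] End ℂ V := llcomp ℂ V _ V T.symm.toLinearMap ∘ₗ emb
  have hA (ω : Ω) : emb ω = emb e ∘ₗ A ω :=
    LinearMap.ext fun v => (T.apply_symm_apply (emb ω v)).symm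
  let F : QuadraticMap ℂ Ω (End ℂ V) :=
    BilinMap.toQuadraticMap ((mul ℂ _).compl₁₂ A A) - (Algebra.linearMap ℂ _).compQuadraticMap q
  have hF (x : Ω) (hx : QuadraticMap.polar q e x = 0) : F x = 0 := by
    refine QuadraticMap.eq_zero_of_polar_eq_zero_of_forall_anisotropic hqnd (by simp [he]) F
      (fun z hz hqz => ?_) hx
    simp [F, mul_self_eq_smul_one_of_anisotropic hdim (fun ω hω => (hdich ω hω).1) he hker A hA
      hz hqz, Algebra.algebraMap_eq_smul_one]
  refine CliffordAlgebra.nonempty_evenAlgHom_of_mul_self_eq he A fun x hx => ?_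
  simpa [F, sub_eq_zero] using hF x hx

/-- a `k`-symplectic vector space `(V, Ω, q)` (here `Ω` is given as an
abstract `k`-dimensional space embedded in `Λ²V*` by an injective linear map `emb`)
with `q` nondegenerate and `k ≥ 2` makes `V` a module over the even Clifford
algebra `Cl⁰(Ω, q)` (nontrivial, since the action is unital and `V ≠ 0`). -/
theorem stmt3 (V : Type*) [AddCommGroup V] [Module ℂ V] [FiniteDimensional ℂ V]
    (Ω : Type*) [AddCommGroup Ω] [Module ℂ Ω] [FiniteDimensional ℂ Ω]
    (n k : ℕ) (hn : 0 < n) (hdim : finrank ℂ V = 4 * n)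
    (emb : Ω →ₗ[ℂ] LinearMap.BilinForm ℂ V) (hemb : Function.Injective emb)
    (halt : ∀ ω : Ω, (emb ω).IsAlt)
    (hk : finrank ℂ Ω = k) (hk2 : 2 ≤ k)
    (q : QuadraticForm ℂ Ω)
    (hdich : ∀ ω : Ω, ω ≠ 0 →
      (q ω = 0 → finrank ℂ (LinearMap.ker (emb ω)) = 2 * n) ∧
      (q ω ≠ 0 → LinearMap.ker (emb ω) = ⊥))
    (hqnd : ∀ x : Ω, (∀ y : Ω, QuadraticMap.polar q x y = 0) → x = 0) :
    Nonempty (↥(CliffordAlgebra.even q) →ₐ[ℂ] Module.End ℂ V) :=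
  stmt3_general V Ω n hdim emb q hdich hqnd
end

section
/- Let (V, Ω, q) be a nondegenerate k-symplectic complex vector space (dim Ω = k, q nondegenerate). Then dim_ℂ V = 2^{⌊(k−1)/2⌋} · m for some positive integer m. In particular 2^{⌊(k−1)/2⌋} divides dim_ℂ V. -/
/-!
Choose `e ∈ Ω` with `q e = 1`; then `ω_e` is nondegenerate and `J_τ = ω_e⁻¹ ω_τ` is
defined. For `τ ⊥ e` with `l² = -q τ ≠ 0` the vectors `τ ∓ l e` are isotropic, so the
`±l`-eigenspaces of `J_τ`, being the kernels of `ω_{τ ∓ l e}`, have dimension `2n` each;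
they fill `V`, whence `J_τ² = -q τ`. Completing `e` to an orthonormal basis
`e, e₁, …, e_{k-1}` of `Ω` turns the `J_{eᵢ}` into `k - 1` anticommuting complex
structures on `V`.

For anticommuting complex structures `J₁, …, J_m`, the map `J₂` exchanges the
`±i`-eigenspaces of `J₁`, so the `i`-eigenspace has half the dimension, and the products
`J₂ J_j` (`j ≥ 3`) restrict to `m - 2` anticommuting complex structures on it.
Induction gives `2 ^ ⌊m / 2⌋ ∣ dim V`.
-/

open Module LinearMap Set
open LinearMap (BilinForm)

section Ring

variable {R : Type*} [Ring R] {a b c : R}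

theorem mul_mul_mul_of_anticomm (ha : a * a = -1) (hab : a * b = -(b * a)) (c : R) :
    a * b * (a * c) = b * c := by
  have hba : b * a = -(a * b) := by rw [hab, neg_neg]
  rw [mul_assoc, ← mul_assoc b, hba, neg_mul, mul_neg, ← mul_assoc, ← mul_assoc, ha]
  noncomm_ring

theorem commute_mul_of_anticomm (hab : a * b = -(b * a)) (hac : a * c = -(c * a)) :
    Commute a (b * c) := by
  rw [Commute, SemiconjBy, ← mul_assoc, hab, neg_mul, mul_assoc, hac, mul_neg, neg_neg,
    mul_assoc]

end Ring

namespace Module.End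

section CommRing

variable {R M : Type*} [CommRing R] [AddCommGroup M] [Module R M] {f g : End R M} {a : R}

theorem mapsTo_eigenspace_neg_of_anticomm (h : f * g = -(g * f)) (μ : R) :
    MapsTo g (f.eigenspace μ) (f.eigenspace (-μ)) := fun x hx => by
  rw [SetLike.mem_coe, mem_eigenspace_iff] at hx ⊢
  rw [← mul_apply, h, LinearMap.neg_apply, mul_apply, hx, map_smul, neg_smul]

theorem mul_self_eq_of_eigenspace_sup_eq_top (h : f.eigenspace a ⊔ f.eigenspace (-a) = ⊤) :
    f * f = a ^ 2 • 1 := by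
  ext x
  obtain ⟨y, hy, z, hz, rfl⟩ := Submodule.mem_sup.mp (h ▸ Submodule.mem_top : x ∈ _)
  rw [mem_eigenspace_iff] at hy hz
  simp only [mul_apply, map_add, hy, hz, map_smul, LinearMap.smul_apply, one_apply, smul_smul]
  module

end CommRing

variable {K M : Type*} [Field K] [AddCommGroup M] [Module K M] {f : End K M} {a : K}

theorem finrank_eigenspace_neg_le [FiniteDimensional K M] {g : End K M} (hg : g * g = -1)
    (h : f * g = -(g * f)) (μ : K) :
    finrank K (f.eigenspace (-μ)) ≤ finrank K (f.eigenspace μ) := by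
  have hle : f.eigenspace (-μ) ≤ (f.eigenspace μ).map g := fun x hx =>
    ⟨-g x, by simpa using mapsTo_eigenspace_neg_of_anticomm h (-μ) hx, by
      rw [map_neg, ← mul_apply, hg, LinearMap.neg_apply, one_apply, neg_neg]⟩
  exact (Submodule.finrank_mono hle).trans (Submodule.finrank_map_le g _)

variable [NeZero (2 : K)]

theorem disjoint_eigenspace_neg (f : End K M) (ha : a ≠ 0) :
    Disjoint (f.eigenspace a) (f.eigenspace (-a)) :=
  f.disjoint_genEigenspace (fun h => ha <| by
    have : (2 : K) * a = 0 := by linear_combination h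
    exact (mul_eq_zero.mp this).resolve_left two_ne_zero) 1 1

theorem eigenspace_sup_eigenspace_neg_eq_top (ha : a ≠ 0) (hf : f * f = a ^ 2 • 1) :
    f.eigenspace a ⊔ f.eigenspace (-a) = ⊤ := by
  have hff : ∀ x, f (f x) = a ^ 2 • x := fun x => by
    rw [← mul_apply, hf, LinearMap.smul_apply, one_apply]
  refine eq_top_iff.mpr fun x _ => Submodule.mem_sup.mpr
    ⟨(2 * a)⁻¹ • (a • x + f x), ?_, (2 * a)⁻¹ • (a • x - f x), ?_, ?_⟩
  · rw [mem_eigenspace_iff, map_smul, map_add, map_smul, hff]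
    module
  · rw [mem_eigenspace_iff, map_smul, map_sub, map_smul, hff]
    module
  · have h2a : (2 * a)⁻¹ * 2 * a = 1 := by field_simp
    rw [← smul_add, add_add_sub_cancel, ← two_smul K, smul_smul, smul_smul, h2a, one_smul]

theorem mul_self_eq_sq_smul_one_iff [FiniteDimensional K M] (ha : a ≠ 0) :
    f * f = a ^ 2 • 1 ↔
      finrank K (f.eigenspace a) + finrank K (f.eigenspace (-a)) = finrank K M := by
  have hsup := Submodule.finrank_sup_add_finrank_inf_eq (f.eigenspace a) (f.eigenspace (-a))
  rw [(f.disjoint_eigenspace_neg ha).eq_bot, finrank_bot, add_zero] at hsup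
  rw [← hsup]
  exact ⟨fun hf => by rw [eigenspace_sup_eigenspace_neg_eq_top ha hf, finrank_top],
    fun h => mul_self_eq_of_eigenspace_sup_eq_top (Submodule.eq_top_of_finrank_eq h)⟩

end Module.End

section ComplexStructure

open Module.End

variable {W : Type*} [AddCommGroup W] [Module ℂ W] [FiniteDimensional ℂ W]

theorem finrank_eq_two_mul_finrank_eigenspace_I {J J' : End ℂ W} (hJ : J * J = -1)
    (hJ' : J' * J' = -1) (h : J * J' = -(J' * J)) :
    finrank ℂ W = 2 * finrank ℂ (J.eigenspace Complex.I) := by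
  have hsum := (mul_self_eq_sq_smul_one_iff Complex.I_ne_zero).mp
    (by rw [hJ, Complex.I_sq, neg_one_smul])
  have hle := finrank_eigenspace_neg_le hJ' h Complex.I
  have hge := finrank_eigenspace_neg_le hJ' h (-Complex.I)
  rw [neg_neg] at hge
  omega

theorem two_pow_dvd_finrank_of_anticomm (m : ℕ) (J : Fin m → End ℂ W)
    (hsq : ∀ i, J i * J i = -1) (hanti : Pairwise fun i j => J i * J j = -(J j * J i)) :
    2 ^ (m / 2) ∣ finrank ℂ W := by
  induction m using Nat.twoStepInduction generalizing W with
  | zero => simp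
  | one => simp
  | more p ih _ =>
    let E := (J 0).eigenspace Complex.I
    have hE : ∀ j : Fin p, MapsTo (J 1 * J j.succ.succ) E E := fun j =>
      mapsTo_genEigenspace_of_comm
        (commute_mul_of_anticomm (hanti Fin.zero_ne_one) (hanti (Fin.succ_ne_zero _).symm)) _ _
    let J' : Fin p → End ℂ E := fun j => (J 1 * J j.succ.succ).restrict (hE j)
    have hJ' : ∀ i j (x : E), ((J' i * J' j) x : W) = (J i.succ.succ * J j.succ.succ) x := by
      intro i j x
      have h1i : (1 : Fin (p + 2)) ≠ i.succ.succ :=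
        ((Fin.succ_injective _).ne (Fin.succ_ne_zero i)).symm
      exact congrArg (· x) (mul_mul_mul_of_anticomm (hsq 1) (hanti h1i) _)
    have hsq' : ∀ j, J' j * J' j = -1 := fun j => by
      ext x
      rw [hJ', hsq]
      rfl
    have hanti' : Pairwise fun i j => J' i * J' j = -(J' j * J' i) := fun i j hij => by
      ext x
      rw [LinearMap.neg_apply, Submodule.coe_neg, hJ', hJ',
        hanti ((Fin.succ_injective _).ne ((Fin.succ_injective _).ne hij))]
      rfl
    rw [finrank_eq_two_mul_finrank_eigenspace_I (hsq 0) (hsq 1) (hanti Fin.zero_ne_one),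
      Nat.add_div_right p two_pos, pow_succ']
    exact mul_dvd_mul_left 2 (ih J' hsq' hanti')

end ComplexStructure

namespace LinearMap.BilinForm

variable {K V : Type*} [Field K] [AddCommGroup V] [Module K V] [FiniteDimensional K V]

/-- `C ↦ B⁻¹ ∘ C`: the endomorphism `J` with `C x = B (J x)`. -/
noncomputable def relEnd (B : BilinForm K V) (hB : B.Nondegenerate) :
    BilinForm K V →ₗ[K] End K V :=
  LinearMap.llcomp K V (Dual K V) V (B.toDual hB).symm.toLinearMap

theorem eigenspace_relEnd {B : BilinForm K V} (hB : B.Nondegenerate) (C : BilinForm K V)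
    (μ : K) : (B.relEnd hB C).eigenspace μ = LinearMap.ker (C - μ • B) := by
  ext x
  rw [Module.End.mem_eigenspace_iff, LinearMap.mem_ker, LinearMap.sub_apply, sub_eq_zero]
  exact (B.toDual hB).symm_apply_eq.trans (by rw [map_smul]; rfl)

end LinearMap.BilinForm

namespace QuadraticMap

theorem map_sub_smul_of_polar_eq_zero {K Ω : Type*} [CommRing K] [AddCommGroup Ω]
    [Module K Ω] {q : QuadraticForm K Ω} {e τ : Ω} (h : QuadraticMap.polar q e τ = 0) (l : K) :
    q (τ - l • e) = q τ + l ^ 2 * q e := by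
  have hpol : QuadraticMap.polar q τ ((-l) • e) = 0 := by
    rw [polar_smul_right, polar_comm, h, smul_zero]
  simp only [QuadraticMap.polar, sub_eq_zero, sub_sub] at hpol
  rw [sub_eq_add_neg, ← neg_smul, hpol, QuadraticMap.map_smul, smul_eq_mul]
  ring

theorem exists_orthonormal_of_isAlgClosed {K Ω : Type*} [Field K] [IsAlgClosed K]
    [Invertible (2 : K)] [AddCommGroup Ω] [Module K Ω] [FiniteDimensional K Ω]
    (q : QuadraticForm K Ω) (hq : ∀ x, (∀ y, QuadraticMap.polar q x y = 0) → x = 0) :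
    ∃ v : Fin (finrank K Ω) → Ω, (∀ i, q (v i) = 1) ∧
      Pairwise fun i j => QuadraticMap.polar q (v i) (v j) = 0 := by
  have hsep : (associated q).SeparatingLeft := fun x hx => hq x fun y => by
    simpa [associated_apply, QuadraticMap.polar, (isUnit_of_invertible (2 : K)).ne_zero]
      using hx y
  obtain ⟨f⟩ := q.equivalent_weightedSumSquares_of_isAlgClosed hsep
  refine ⟨fun i => f.symm (Pi.single i 1), fun i => ?_, fun i j hij => ?_⟩
  · rw [f.symm.map_app]
    simp [weightedSumSquares_apply, Pi.single_apply]
  · simp only [QuadraticMap.polar, ← map_add, f.symm.map_app]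
    simp [weightedSumSquares_apply, Pi.single_apply, mul_add, Finset.sum_add_distrib, hij,
      hij.symm]

end QuadraticMap

section KSymplectic

variable {V Ω : Type*} [AddCommGroup V] [Module ℂ V] [FiniteDimensional ℂ V]
  [AddCommGroup Ω] [Module ℂ Ω] {n : ℕ} {emb : Ω →ₗ[ℂ] BilinForm ℂ V}
  {q : QuadraticForm ℂ Ω} {e : Ω} (hB : (emb e).Nondegenerate)
  (hdim : finrank ℂ V = 4 * n)
  (hiso : ∀ ω, ω ≠ 0 → q ω = 0 → finrank ℂ (LinearMap.ker (emb ω)) = 2 * n)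
  (he : q e = 1)

include hdim hiso he in
theorem relEnd_mul_self {τ : Ω} (hτ : QuadraticMap.polar q e τ = 0) (hqτ : q τ ≠ 0) :
    (emb e).relEnd hB (emb τ) * (emb e).relEnd hB (emb τ) = (-q τ) • 1 := by
  obtain ⟨l, hl⟩ := IsAlgClosed.exists_pow_nat_eq (-q τ) two_pos
  have hfinrank : ∀ {l : ℂ}, l ^ 2 = -q τ →
      finrank ℂ (((emb e).relEnd hB (emb τ)).eigenspace l) = 2 * n := fun {l} hl => by
    rw [BilinForm.eigenspace_relEnd, ← map_smul, ← map_sub]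
    refine hiso _ (fun h0 => hqτ ?_) ?_
    · rw [sub_eq_zero.mp h0, QuadraticMap.polar_smul_right, QuadraticMap.polar_self, he] at hτ
      have hl0 : l = 0 := by simpa using hτ
      rw [← neg_eq_zero, ← hl, hl0, zero_pow two_ne_zero]
    · rw [QuadraticMap.map_sub_smul_of_polar_eq_zero hτ, he, hl]
      ring
  have hl0 : l ≠ 0 := by rintro rfl; simp_all
  rw [← hl, Module.End.mul_self_eq_sq_smul_one_iff hl0, hfinrank hl,
    hfinrank (by rw [neg_sq, hl]), hdim]
  ring

include hdim hiso he in
theorem relEnd_anticomm {τ σ : Ω} (hτ : QuadraticMap.polar q e τ = 0)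
    (hσ : QuadraticMap.polar q e σ = 0) (hqτ : q τ = 1) (hqσ : q σ = 1)
    (hτσ : QuadraticMap.polar q τ σ = 0) :
    (emb e).relEnd hB (emb τ) * (emb e).relEnd hB (emb σ) =
      -((emb e).relEnd hB (emb σ) * (emb e).relEnd hB (emb τ)) := by
  have hq : q (τ + σ) = 2 := by
    rw [QuadraticMap.polar] at hτσ
    linear_combination hτσ + hqτ + hqσ
  have hsum := relEnd_mul_self hB hdim hiso he (τ := τ + σ)
    (by rw [QuadraticMap.polar_add_right, hτ, hσ, add_zero]) (by rw [hq]; exact two_ne_zero)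
  rw [map_add, map_add, add_mul, mul_add, mul_add,
    relEnd_mul_self hB hdim hiso he hτ (by simp [hqτ]),
    relEnd_mul_self hB hdim hiso he hσ (by simp [hqσ]), hq, hqτ, hqσ] at hsum
  linear_combination (norm := module) hsum

include hdim hiso in
theorem two_pow_dvd_finrank_of_kSymplectic [FiniteDimensional ℂ Ω]
    (hreg : ∀ ω, ω ≠ 0 → q ω ≠ 0 → LinearMap.ker (emb ω) = ⊥)
    (hqnd : ∀ x, (∀ y, QuadraticMap.polar q x y = 0) → x = 0) :
    2 ^ ((finrank ℂ Ω - 1) / 2) ∣ finrank ℂ V := by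
  obtain ⟨v, hv, hvorth⟩ := QuadraticMap.exists_orthonormal_of_isAlgClosed q hqnd
  generalize finrank ℂ Ω = k at v hv hvorth ⊢
  obtain _ | m := k
  · simp
  have hv0 : v 0 ≠ 0 := fun h => by simpa [h] using hv 0
  have hB : (emb (v 0)).Nondegenerate :=
    BilinForm.nondegenerate_iff_ker_eq_bot.mpr (hreg _ hv0 (by simp [hv]))
  let J : Fin m → Module.End ℂ V := fun i => (emb (v 0)).relEnd hB (emb (v i.succ))
  have hsq : ∀ i, J i * J i = -1 := fun i => by
    rw [relEnd_mul_self hB hdim hiso (hv 0) (hvorth (Fin.succ_ne_zero i).symm) (by simp [hv]),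
      hv, neg_one_smul]
  have hanti : Pairwise fun i j => J i * J j = -(J j * J i) := fun i j hij =>
    relEnd_anticomm hB hdim hiso (hv 0) (hvorth (Fin.succ_ne_zero i).symm)
      (hvorth (Fin.succ_ne_zero j).symm) (hv _) (hv _) (hvorth ((Fin.succ_injective _).ne hij))
  simpa using two_pow_dvd_finrank_of_anticomm m J hsq hanti

end KSymplectic

theorem stmt5_general (V : Type*) [AddCommGroup V] [Module ℂ V] [FiniteDimensional ℂ V]
    (Ω : Type*) [AddCommGroup Ω] [Module ℂ Ω] [FiniteDimensional ℂ Ω]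
    (n k : ℕ) (hn : 0 < n) (hdim : finrank ℂ V = 4 * n)
    (emb : Ω →ₗ[ℂ] LinearMap.BilinForm ℂ V)
    (hk : finrank ℂ Ω = k)
    (q : QuadraticForm ℂ Ω)
    (hdich : ∀ ω : Ω, ω ≠ 0 →
      (q ω = 0 → finrank ℂ (LinearMap.ker (emb ω)) = 2 * n) ∧
      (q ω ≠ 0 → LinearMap.ker (emb ω) = ⊥))
    (hqnd : ∀ x : Ω, (∀ y : Ω, QuadraticMap.polar q x y = 0) → x = 0) :
    (∃ m : ℕ, 0 < m ∧ finrank ℂ V = 2 ^ ((k - 1) / 2) * m) ∧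
      2 ^ ((k - 1) / 2) ∣ finrank ℂ V := by
  subst hk
  obtain ⟨c, hc⟩ := two_pow_dvd_finrank_of_kSymplectic hdim (fun ω hω => (hdich ω hω).1)
    (fun ω hω => (hdich ω hω).2) hqnd
  refine ⟨⟨c, Nat.pos_of_ne_zero fun hc0 => ?_, hc⟩, ⟨c, hc⟩⟩
  simp [hc0] at hc
  omega

/-- a nondegenerate `k`-symplectic complex vector space `(V, Ω, q)`
satisfies `dim_ℂ V = 2^{⌊(k-1)/2⌋} · m` for some positive integer `m`; in
particular `2^{⌊(k-1)/2⌋}` divides `dim_ℂ V`. -/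
theorem stmt5 (V : Type*) [AddCommGroup V] [Module ℂ V] [FiniteDimensional ℂ V]
    (Ω : Type*) [AddCommGroup Ω] [Module ℂ Ω] [FiniteDimensional ℂ Ω]
    (n k : ℕ) (hn : 0 < n) (hdim : finrank ℂ V = 4 * n)
    (emb : Ω →ₗ[ℂ] LinearMap.BilinForm ℂ V) (hemb : Function.Injective emb)
    (halt : ∀ ω : Ω, (emb ω).IsAlt)
    (hk : finrank ℂ Ω = k)
    (q : QuadraticForm ℂ Ω)
    (hdich : ∀ ω : Ω, ω ≠ 0 →
      (q ω = 0 → finrank ℂ (LinearMap.ker (emb ω)) = 2 * n) ∧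
      (q ω ≠ 0 → LinearMap.ker (emb ω) = ⊥))
    (hqnd : ∀ x : Ω, (∀ y : Ω, QuadraticMap.polar q x y = 0) → x = 0) :
    (∃ m : ℕ, 0 < m ∧ finrank ℂ V = 2 ^ ((k - 1) / 2) * m) ∧
      2 ^ ((k - 1) / 2) ∣ finrank ℂ V :=
  stmt5_general V Ω n k hn hdim emb hk q hdich hqnd
end

section
/- Let V be a complex vector space of even dimension, W a finite-dimensional vector space with a nondegenerate quadratic form q of the stated kernel-dichotomy type making (V, W, q) a k-symplectic space, and suppose additionally the structure is real with q of real signature (r,s), r > 0. Then the underlying real vector space V_ℝ carries a nontrivial structure of a Cl_{r−1,s}-module. -/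
set_option synthInstance.maxHeartbeats 400000
set_option maxHeartbeats 800000

open Module LinearMap

/-- The standard real quadratic form of signature `(r, s)` (`r` minuses, `s`
pluses) on `ℝ^{r+s}`. -/
noncomputable def signQF (r s : ℕ) : QuadraticForm ℝ (Fin (r + s) → ℝ) :=
  QuadraticMap.weightedSumSquares ℝ (fun i : Fin (r + s) => if (i : ℕ) < r then (-1 : ℝ) else 1)

/-- The real Clifford algebra `Cl_{r,s}`. -/
noncomputable abbrev CliffordRS (r s : ℕ) := CliffordAlgebra (signQF r s)

/-!
Fix `ω₀` with `q ω₀ = -1`. By the dichotomy `ω₀` is nondegenerate, so `ω = ω₀ ∘ A ω` for a linear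
`A : Ω_ℝ → End V_ℝ`. If `ω ⊥ ω₀`, `q ω ≠ 0` and `z² = q ω`, then `ω - z ω₀` is `q`-isotropic and its
complexification is `ω₀ ∘ (A ω - z)`, so the `±z`-eigenspaces of `A ω` each fill half of `ℂ ⊗ V_ℝ`
and `(A ω)² = z² = q ω`. Along a line `ω + t y` with `q y ≠ 0` the defect `(A ω)² - q ω` is then
affine in `t` and vanishes for all but finitely many `t`, which removes the condition `q ω ≠ 0`.
Restricting `A` to `ω₀^⊥ ≅ ℝ^{r-1,s}` gives the Clifford relation.
-/

open scoped TensorProduct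

open Polynomial in
theorem QuadraticMap.infinite_setOf_map_add_smul_ne_zero {K M : Type*} [Field K] [Infinite K]
    [AddCommGroup M] [Module K M] (Q : QuadraticForm K M) {y : M} (hy : Q y ≠ 0) (m : M) :
    {t : K | Q (m + t • y) ≠ 0}.Infinite := by
  set p : K[X] := C (Q y) * X ^ 2 + C (polar Q m y) * X + C (Q m)
  have hp : p ≠ 0 := fun h ↦ hy (by simpa [p] using congr_arg (coeff · 2) h)
  have heval : ∀ t, p.eval t = Q (m + t • y) := fun t ↦ by
    simp only [p, eval_add, eval_mul, eval_C, eval_X, eval_pow, QuadraticMap.map_add Q,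
      QuadraticMap.map_smul, polar_smul_right, smul_eq_mul]
    ring
  convert (finite_setOfPred_isRoot hp).infinite_compl using 1
  ext t
  simp [heval]

theorem LinearMap.mul_self_eq_algebraMap_of_anisotropic {K M A : Type*} [Field K] [Infinite K]
    [AddCommGroup M] [Module K M] [Ring A] [Algebra K A] (Q : QuadraticForm K M)
    (f : M →ₗ[K] A) (hf : ∀ m, Q m ≠ 0 → f m * f m = algebraMap K A (Q m))
    {y : M} (hy : Q y ≠ 0) (m : M) : f m * f m = algebraMap K A (Q m) := by
  set D := f m * f m - algebraMap K A (Q m)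
  set P := f m * f y + f y * f m - algebraMap K A (QuadraticMap.polar Q m y)
  have hexpand : ∀ t : K, f (m + t • y) * f (m + t • y) - algebraMap K A (Q (m + t • y)) =
      D + t • P + (t * t) • (f y * f y - algebraMap K A (Q y)) := fun t ↦ by
    simp only [D, P, map_add, map_smul, QuadraticMap.map_add Q, QuadraticMap.map_smul,
      QuadraticMap.polar_smul_right, Algebra.algebraMap_eq_smul_one, add_mul, mul_add,
      smul_mul_assoc, mul_smul_comm]
    module
  have hline : ∀ t : K, Q (m + t • y) ≠ 0 → D + t • P = 0 := fun t ht ↦ by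
    have h := hexpand t
    rw [hf _ ht, hf y hy, sub_self, sub_self, smul_zero, add_zero] at h
    exact h.symm
  obtain ⟨t₁, ht₁, t₂, ht₂, hne⟩ := (Q.infinite_setOf_map_add_smul_ne_zero hy m).nontrivial
  have hP : (t₁ - t₂) • P = 0 := by
    rw [sub_smul, ← add_sub_add_left_eq_sub _ _ D, hline t₁ ht₁, hline t₂ ht₂, sub_self]
  rw [smul_eq_zero, sub_eq_zero] at hP
  have hD := hline t₁ ht₁
  rw [hP.resolve_left hne, smul_zero, add_zero] at hD
  exact sub_eq_zero.mp hD

theorem Module.End.sub_mul_sub_eq_zero_of_finrank_eigenspace_add {K V : Type*} [Field K]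
    [AddCommGroup V] [Module K V] [FiniteDimensional K V] (f : End K V) {a b : K} (hab : a ≠ b)
    (h : finrank K (f.eigenspace a) + finrank K (f.eigenspace b) = finrank K V) :
    (f - algebraMap K _ a) * (f - algebraMap K _ b) = 0 := by
  have hdisj : f.eigenspace a ⊓ f.eigenspace b = ⊥ :=
    (f.eigenspaces_iSupIndep.pairwiseDisjoint hab).eq_bot
  have htop : f.eigenspace a ⊔ f.eigenspace b = ⊤ := by
    apply Submodule.eq_top_of_finrank_eq
    have := Submodule.finrank_sup_add_finrank_inf_eq (f.eigenspace a) (f.eigenspace b)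
    rw [hdisj, finrank_bot] at this
    omega
  have hcomm : Commute (f - algebraMap K _ a) (f - algebraMap K _ b) :=
    ((Commute.refl f).sub_right (Algebra.commute_algebraMap_right b f)).sub_left
      ((Algebra.commute_algebraMap_left a f).sub_right (Algebra.commute_algebraMap_left a _))
  rw [← ker_eq_top, eq_top_iff, ← htop]
  refine sup_le ?_ ?_
  · rw [hcomm.eq, Module.End.mul_eq_comp, eigenspace_def]
    exact ker_le_ker_comp _ _
  · rw [Module.End.mul_eq_comp, eigenspace_def]
    exact ker_le_ker_comp _ _

theorem Module.End.mul_self_eq_algebraMap_of_baseChange {V : Type*} [AddCommGroup V]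
    [Module ℝ V] (E : End ℝ V) (c : ℝ)
    (h : E.baseChange ℂ * E.baseChange ℂ = algebraMap ℝ _ c) : E * E = algebraMap ℝ _ c := by
  apply LinearMap.baseChangeHom_injective ℝ V ℂ
  change (E * E).baseChange ℂ = (algebraMap ℝ (End ℝ V) c).baseChange ℂ
  rw [baseChange_mul, h]
  exact ((Module.End.baseChangeHom ℝ ℂ V).commutes c).symm

theorem LinearMap.BilinForm.baseChange_comp_add_I_smul {V : Type*} [AddCommGroup V]
    [Module ℝ V] (B : LinearMap.BilinForm ℝ V) (E : End ℝ V) (z : ℂ) :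
    BilinForm.baseChange ℂ (B ∘ₗ E + (-z.re) • B) +
        Complex.I • BilinForm.baseChange ℂ ((-z.im) • B) =
      B.baseChange ℂ ∘ₗ (E.baseChange ℂ - z • 1) := by
  ext v w
  simp only [TensorProduct.AlgebraTensorModule.curry_apply, restrictScalars_add,
    restrictScalars_smul, TensorProduct.curry_apply, LinearMap.add_apply, coe_restrictScalars,
    smul_apply, baseChange_tmul, coe_comp, Function.comp_apply, neg_smul, LinearMap.neg_apply,
    smul_eq_mul, mul_one, Complex.real_smul, Complex.ofReal_add, Complex.ofReal_neg,
    Complex.ofReal_mul, mul_neg, restrictScalars_comp, LinearMap.sub_apply,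
    LinearMap.baseChange_tmul, End.one_apply, map_sub, map_smul]
  conv_rhs => rw [← Complex.re_add_im z]
  ring

theorem LinearMap.BilinForm.ker_eq_bot_of_ker_baseChange_eq_bot {V : Type*} [AddCommGroup V]
    [Module ℝ V] {B : LinearMap.BilinForm ℝ V} (h : ker (B.baseChange ℂ) = ⊥) : ker B = ⊥ := by
  rw [eq_bot_iff] at h ⊢
  intro v hv
  have hv' : (1 : ℂ) ⊗ₜ[ℝ] v ∈ ker (B.baseChange ℂ) := by
    rw [mem_ker] at hv ⊢
    ext w
    simp [hv]
  have h1 := h hv'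
  rw [Submodule.mem_bot] at h1 ⊢
  exact Module.Flat.tensorProduct_mk_injective ℝ V ℂ (by simpa using h1)

theorem LinearMap.BilinForm.exists_comp_eq_of_ker_eq_bot {K V Ω : Type*} [Field K]
    [AddCommGroup V] [Module K V] [FiniteDimensional K V] [AddCommGroup Ω] [Module K Ω]
    {B : LinearMap.BilinForm K V} (hB : ker B = ⊥) (β : Ω →ₗ[K] LinearMap.BilinForm K V) :
    ∃ A : Ω →ₗ[K] End K V, ∀ ω, β ω = B ∘ₗ A ω := by
  set D := B.toDual (nondegenerate_iff_ker_eq_bot.mpr hB)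
  refine ⟨llcomp K V (Dual K V) V D.symm ∘ₗ β, fun ω ↦ ?_⟩
  ext v w
  simp [D]

section KSymplectic

variable {V Ω : Type*} [AddCommGroup V] [Module ℝ V] [AddCommGroup Ω] [Module ℝ Ω]
  {β : Ω →ₗ[ℝ] LinearMap.BilinForm ℝ V} {q : QuadraticForm ℝ Ω} {n : ℕ}
  {ω₀ : Ω} {A : Ω →ₗ[ℝ] End ℝ V}

theorem finrank_eigenspace_baseChange_eq
    (hiso : ∀ ω₁ ω₂ : Ω, ¬(ω₁ = 0 ∧ ω₂ = 0) →
      (q ω₁ - q ω₂ = 0 ∧ QuadraticMap.polar q ω₁ ω₂ = 0) →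
        finrank ℂ (ker (BilinForm.baseChange ℂ (β ω₁) +
          Complex.I • BilinForm.baseChange ℂ (β ω₂))) = 2 * n)
    (hq₀ : q ω₀ = -1) (hB₀ : ker (BilinForm.baseChange ℂ (β ω₀)) = ⊥)
    (hA : ∀ ω, β ω = β ω₀ ∘ₗ A ω) {ω : Ω} (hω : QuadraticMap.polar q ω ω₀ = 0)
    {z : ℂ} (hz : z ^ 2 = q ω) (hz₀ : z ≠ 0) :
    finrank ℂ (End.eigenspace ((A ω).baseChange ℂ) z) = 2 * n := by
  have hsq : z.re * z.re - z.im * z.im = q ω ∧ z.re * z.im + z.im * z.re = 0 := by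
    simpa [pow_two, Complex.ext_iff] using hz
  have hpolar₀ : QuadraticMap.polar q ω₀ ω₀ = -2 := by
    rw [QuadraticMap.polar_self, hq₀]; norm_num
  have hω₀ : ω₀ ≠ 0 := fun h ↦ by simp [h] at hq₀
  have hker : ker (BilinForm.baseChange ℂ (β (ω + (-z.re) • ω₀)) +
      Complex.I • BilinForm.baseChange ℂ (β ((-z.im) • ω₀))) =
      End.eigenspace ((A ω).baseChange ℂ) z := by
    rw [map_add, map_smul, map_smul, hA ω, BilinForm.baseChange_comp_add_I_smul,
      ker_comp_of_ker_eq_bot _ hB₀, End.eigenspace_def]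
  rw [← hker]
  refine hiso _ _ ?_ ⟨?_, ?_⟩
  · rintro ⟨h₁, h₂⟩
    have him : z.im = 0 := by simpa [hω₀] using h₂
    have hre : z.re = 0 := by
      have := congr_arg (QuadraticMap.polar q · ω₀) h₁
      simp only [QuadraticMap.polar_add_left, QuadraticMap.polar_smul_left, hω, hpolar₀,
        QuadraticMap.polar_zero_left, smul_eq_mul] at this
      linarith
    exact hz₀ (Complex.ext hre him)
  · simp only [QuadraticMap.map_add q, QuadraticMap.map_smul, QuadraticMap.polar_smul_right,
      hω, hq₀, smul_eq_mul]
    linarith [hsq.1]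
  · simp only [QuadraticMap.polar_smul_right, QuadraticMap.polar_add_left,
      QuadraticMap.polar_smul_left, hω, hpolar₀, smul_eq_mul]
    linarith [hsq.2]

theorem mul_self_eq_algebraMap_of_polar_eq_zero [FiniteDimensional ℝ V]
    (hdim : finrank ℝ V = 4 * n)
    (hiso : ∀ ω₁ ω₂ : Ω, ¬(ω₁ = 0 ∧ ω₂ = 0) →
      (q ω₁ - q ω₂ = 0 ∧ QuadraticMap.polar q ω₁ ω₂ = 0) →
        finrank ℂ (ker (BilinForm.baseChange ℂ (β ω₁) +
          Complex.I • BilinForm.baseChange ℂ (β ω₂))) = 2 * n)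
    (hq₀ : q ω₀ = -1) (hB₀ : ker (BilinForm.baseChange ℂ (β ω₀)) = ⊥)
    (hA : ∀ ω, β ω = β ω₀ ∘ₗ A ω) {ω : Ω} (hω : QuadraticMap.polar q ω ω₀ = 0)
    (hqω : q ω ≠ 0) : A ω * A ω = algebraMap ℝ _ (q ω) := by
  obtain ⟨z, hz⟩ := IsAlgClosed.exists_pow_nat_eq (q ω : ℂ) two_pos
  have hz₀ : z ≠ 0 := by
    rintro rfl
    exact hqω (by exact_mod_cast (zero_pow two_ne_zero).symm.trans hz |>.symm)
  set E := (A ω).baseChange ℂ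
  have hsplit := End.sub_mul_sub_eq_zero_of_finrank_eigenspace_add E
    (fun h ↦ hz₀ (by linear_combination h / 2) : z ≠ -z)
    (by rw [finrank_eigenspace_baseChange_eq hiso hq₀ hB₀ hA hω hz hz₀,
      finrank_eigenspace_baseChange_eq hiso hq₀ hB₀ hA hω (by rw [neg_sq, hz])
        (neg_ne_zero.mpr hz₀), finrank_baseChange, hdim]; ring)
  rw [map_neg, sub_neg_eq_add, ← (Algebra.commute_algebraMap_right z E).mul_self_sub_mul_self_eq',
    ← map_mul, ← pow_two z, hz, sub_eq_zero] at hsplit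
  apply End.mul_self_eq_algebraMap_of_baseChange
  rw [hsplit, IsScalarTower.algebraMap_apply ℝ ℂ, Complex.coe_algebraMap]

end KSymplectic

noncomputable def signConsEquiv (r s : ℕ) : (ℝ × (Fin (r + s) → ℝ)) ≃ₗ[ℝ] (Fin (r + 1 + s) → ℝ) :=
  (Fin.consLinearEquiv ℝ fun _ : Fin (r + s + 1) ↦ ℝ).trans
    (LinearEquiv.funCongrLeft ℝ ℝ (finCongr (by omega)))

theorem signQF_signConsEquiv (r s : ℕ) (t : ℝ) (u : Fin (r + s) → ℝ) :
    signQF (r + 1) s (signConsEquiv r s (t, u)) = -(t * t) + signQF r s u := by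
  simp only [signQF, QuadraticMap.weightedSumSquares_apply, signConsEquiv]
  rw [← (finCongr (by omega : r + s + 1 = r + 1 + s)).sum_comp, Fin.sum_univ_succ]
  simp [Fin.val_succ]

theorem signQF_single_ne_zero (r s : ℕ) (i : Fin (r + s)) : signQF r s (Pi.single i 1) ≠ 0 := by
  simp only [signQF, QuadraticMap.weightedSumSquares_apply]
  rw [Finset.sum_eq_single i (fun j _ hj ↦ by simp [hj]) (by simp)]
  split_ifs <;> norm_num

theorem mul_self_eq_algebraMap_signQF {A : Type*} [Ring A] [Algebra ℝ A] {r s : ℕ}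
    (f : (Fin (r + s) → ℝ) →ₗ[ℝ] A)
    (hf : ∀ u, signQF r s u ≠ 0 → f u * f u = algebraMap ℝ A (signQF r s u))
    (u : Fin (r + s) → ℝ) : f u * f u = algebraMap ℝ A (signQF r s u) := by
  rcases isEmpty_or_nonempty (Fin (r + s)) with _ | ⟨⟨i⟩⟩
  · simp [Subsingleton.elim u 0]
  · exact f.mul_self_eq_algebraMap_of_anisotropic _ hf (signQF_single_ne_zero r s i) u

theorem QuadraticMap.IsometryEquiv.exists_orthogonal_isometry_signQF {Ω : Type*}
    [AddCommGroup Ω] [Module ℝ Ω] {q : QuadraticForm ℝ Ω} {r s : ℕ}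
    (φ : q.IsometryEquiv (signQF (r + 1) s)) :
    ∃ (ω₀ : Ω) (g : (Fin (r + s) → ℝ) →ₗ[ℝ] Ω), q ω₀ = -1 ∧
      ∀ u, q (g u) = signQF r s u ∧ QuadraticMap.polar q (g u) ω₀ = 0 := by
  set e := (signConsEquiv r s).trans φ.symm.toLinearEquiv
  have he : ∀ t u, q (e (t, u)) = -(t * t) + signQF r s u := fun t u ↦ by
    simp [e, φ.symm.map_app, signQF_signConsEquiv]
  refine ⟨e (1, 0), e.toLinearMap ∘ₗ LinearMap.inr ℝ ℝ _, by simp [he], fun u ↦ ⟨by simp [he], ?_⟩⟩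
  simp only [QuadraticMap.polar, LinearMap.comp_apply, LinearMap.inr_apply, LinearEquiv.coe_coe,
    ← map_add, Prod.mk_add_mk, he]
  simp

theorem stmt15_general (VR : Type*) [AddCommGroup VR] [Module ℝ VR] [FiniteDimensional ℝ VR]
    (ΩR : Type*) [AddCommGroup ΩR] [Module ℝ ΩR]
    (n r s : ℕ) (hr : 0 < r)
    (hdim : finrank ℝ VR = 4 * n)
    (embR : ΩR →ₗ[ℝ] LinearMap.BilinForm ℝ VR)
    (qR : QuadraticForm ℝ ΩR)
    (hsig : Nonempty (QuadraticMap.IsometryEquiv qR (signQF r s)))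
    (hdich : ∀ ω₁ ω₂ : ΩR, ¬(ω₁ = 0 ∧ ω₂ = 0) →
      ((qR ω₁ - qR ω₂ = 0 ∧ QuadraticMap.polar qR ω₁ ω₂ = 0) →
        finrank ℂ (LinearMap.ker
          (LinearMap.BilinForm.baseChange ℂ (embR ω₁) +
            Complex.I • LinearMap.BilinForm.baseChange ℂ (embR ω₂))) = 2 * n) ∧
      (¬(qR ω₁ - qR ω₂ = 0 ∧ QuadraticMap.polar qR ω₁ ω₂ = 0) →
        LinearMap.ker
          (LinearMap.BilinForm.baseChange ℂ (embR ω₁) +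
            Complex.I • LinearMap.BilinForm.baseChange ℂ (embR ω₂)) = ⊥)) :
    Nonempty (CliffordRS (r - 1) s →ₐ[ℝ] Module.End ℝ VR) := by
  obtain ⟨r, rfl⟩ := Nat.exists_eq_add_one_of_ne_zero hr.ne'
  obtain ⟨ω₀, g, hq₀, hg⟩ := hsig.some.exists_orthogonal_isometry_signQF
  have hB₀ : ker (BilinForm.baseChange ℂ (embR ω₀)) = ⊥ := by
    simpa using (hdich ω₀ 0 fun h ↦ by simp [h.1] at hq₀).2 (by simp [hq₀])
  obtain ⟨A, hA⟩ := BilinForm.exists_comp_eq_of_ker_eq_bot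
    (BilinForm.ker_eq_bot_of_ker_baseChange_eq_bot hB₀) embR
  have hf : ∀ u, signQF r s u ≠ 0 →
      (A ∘ₗ g) u * (A ∘ₗ g) u = algebraMap ℝ _ (signQF r s u) := fun u hu ↦ by
    rw [← (hg u).1] at hu ⊢
    exact mul_self_eq_algebraMap_of_polar_eq_zero hdim (fun ω₁ ω₂ h ↦ (hdich ω₁ ω₂ h).1)
      hq₀ hB₀ hA (hg u).2 hu
  exact ⟨CliffordAlgebra.lift (signQF r s) ⟨A ∘ₗ g, mul_self_eq_algebraMap_signQF _ hf⟩⟩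

/-- let `(V, Ω, q)` be a real `k`-symplectic vector space, i.e. `V` is
the complexification of `V_ℝ` (of real dimension `4n`), `Ω` the complexification of a
real space `Ω_ℝ` of 2-forms on `V_ℝ`, the complexified forms
`ω₁ ⊗ 1 + i (ω₂ ⊗ 1)` satisfy the `k`-symplectic kernel dichotomy with respect to
the complexified quadratic form (`q(ω₁ + iω₂) = q ω₁ - q ω₂ + i·2q(ω₁,ω₂)`), and
`q` has real signature `(r, s)` with `r > 0`.  Then `V_ℝ` is a (nontrivial, unital)
module over `Cl_{r-1,s}`. -/
theorem stmt15 (VR : Type*) [AddCommGroup VR] [Module ℝ VR] [FiniteDimensional ℝ VR]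
    (ΩR : Type*) [AddCommGroup ΩR] [Module ℝ ΩR] [FiniteDimensional ℝ ΩR]
    (n k r s : ℕ) (hn : 0 < n) (hr : 0 < r) (hrs : r + s = k)
    (hdim : finrank ℝ VR = 4 * n)
    (embR : ΩR →ₗ[ℝ] LinearMap.BilinForm ℝ VR) (hemb : Function.Injective embR)
    (halt : ∀ ω : ΩR, (embR ω).IsAlt)
    (hk : finrank ℝ ΩR = k)
    (qR : QuadraticForm ℝ ΩR)
    (hsig : Nonempty (QuadraticMap.IsometryEquiv qR (signQF r s)))
    (hdich : ∀ ω₁ ω₂ : ΩR, ¬(ω₁ = 0 ∧ ω₂ = 0) →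
      ((qR ω₁ - qR ω₂ = 0 ∧ QuadraticMap.polar qR ω₁ ω₂ = 0) →
        finrank ℂ (LinearMap.ker
          (LinearMap.BilinForm.baseChange ℂ (embR ω₁) +
            Complex.I • LinearMap.BilinForm.baseChange ℂ (embR ω₂))) = 2 * n) ∧
      (¬(qR ω₁ - qR ω₂ = 0 ∧ QuadraticMap.polar qR ω₁ ω₂ = 0) →
        LinearMap.ker
          (LinearMap.BilinForm.baseChange ℂ (embR ω₁) +
            Complex.I • LinearMap.BilinForm.baseChange ℂ (embR ω₂)) = ⊥)) :
    Nonempty (CliffordRS (r - 1) s →ₐ[ℝ] Module.End ℝ VR) :=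
  stmt15_general VR ΩR n r s hr hdim embR qR hsig hdich
end

section
/- Let (V, Ω, q) be a real k-symplectic vector space with q of real signature (r,s) and s > 0. Then V_ℝ carries a nontrivial structure of a Cl_{s−1,r}-module: choosing real ω₁ with q(ω₁,ω₁) = 1 and setting A = ω₁⁻¹ω₂ for ω₂ in the q-orthogonal complement of ω₁, one has A² = −q(ω₂,ω₂)·Id, giving a representation of the Clifford algebra of (W_ℝ, −q|_{W_ℝ}), which has signature (s−1, r). -/
set_option synthInstance.maxHeartbeats 400000
set_option maxHeartbeats 800000

open Module LinearMap

section AuxStmt16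
set_option maxHeartbeats 1600000
open TensorProduct
variable {V : Type*} [AddCommGroup V] [Module ℝ V] [FiniteDimensional ℝ V]

lemma bc_ext {F G : LinearMap.BilinForm ℂ (ℂ ⊗[ℝ] V)}
    (h : ∀ (a b : ℂ) (x y : V), F (a ⊗ₜ x) (b ⊗ₜ y) = G (a ⊗ₜ x) (b ⊗ₜ y)) : F = G := by
  apply LinearMap.ext; intro z
  apply LinearMap.ext; intro w
  induction z using TensorProduct.induction_on with
  | zero => simp
  | tmul a x =>
    induction w using TensorProduct.induction_on with
    | zero => simp
    | tmul b y => exact h a b x y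
    | add w₁ w₂ h1 h2 => simp [h1, h2]
  | add z₁ z₂ h1 h2 => simp [h1, h2]

lemma bc_comp (B : LinearMap.BilinForm ℝ V) (A : V →ₗ[ℝ] V) :
    LinearMap.BilinForm.baseChange ℂ (B ∘ₗ A) =
      (LinearMap.BilinForm.baseChange ℂ B) ∘ₗ (A.baseChange ℂ) := by
  apply bc_ext; intro a b x y
  simp [LinearMap.BilinForm.baseChange_tmul]

lemma bc_add (B C : LinearMap.BilinForm ℝ V) : LinearMap.BilinForm.baseChange ℂ (B + C) =
    LinearMap.BilinForm.baseChange ℂ B + LinearMap.BilinForm.baseChange ℂ C := by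
  apply bc_ext; intro a b x y
  simp [LinearMap.BilinForm.baseChange_tmul, add_smul]

lemma bc_smul (B : LinearMap.BilinForm ℝ V) (c : ℝ) :
    LinearMap.BilinForm.baseChange ℂ (c • B) =
    (c:ℂ) • LinearMap.BilinForm.baseChange ℂ B := by
  apply bc_ext; intro a b x y
  simp [LinearMap.BilinForm.baseChange_tmul, smul_smul, Complex.real_smul]
  ring

lemma bc_zero : LinearMap.BilinForm.baseChange ℂ (0 : LinearMap.BilinForm ℝ V) = 0 := by
  apply bc_ext; intro a b x y
  simp [LinearMap.BilinForm.baseChange_tmul]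


lemma one_tmul_inj {x : V} (h : (1:ℂ) ⊗ₜ[ℝ] x = 0) : x = 0 := by
  have := congrArg ((TensorProduct.lid ℝ V).toLinearMap ∘ₗ LinearMap.rTensor V Complex.reLm) h
  simpa using this

lemma bij_of_bc_ker {B : LinearMap.BilinForm ℝ V}
    (h : LinearMap.ker (LinearMap.BilinForm.baseChange ℂ B) = ⊥) :
    Function.Bijective B := by
  have hinj : Function.Injective B := by
    rw [← LinearMap.ker_eq_bot]
    rw [Submodule.eq_bot_iff]
    intro x hx
    simp only [LinearMap.mem_ker] at hx
    have h1 : LinearMap.BilinForm.baseChange ℂ B ((1:ℂ) ⊗ₜ[ℝ] x) = 0 := by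
      apply LinearMap.ext; intro w
      induction w using TensorProduct.induction_on with
      | zero => simp
      | tmul b y => simp [LinearMap.BilinForm.baseChange_tmul, hx]
      | add w₁ w₂ h1 h2 => simp [h1, h2]
    have h2 : (1:ℂ) ⊗ₜ[ℝ] x = 0 := by
      have := h ▸ (LinearMap.mem_ker.mpr h1)
      simpa using this
    exact one_tmul_inj h2
  refine ⟨hinj, ?_⟩
  have : finrank ℝ V = finrank ℝ (Module.Dual ℝ V) := Subspace.dual_finrank_eq.symm
  exact (LinearMap.injective_iff_surjective_of_finrank_eq_finrank this).mp hinj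


lemma baseChange_eq_zero {f : V →ₗ[ℝ] V} (h : f.baseChange ℂ = 0) : f = 0 := by
  apply LinearMap.ext; intro x
  have : f.baseChange ℂ ((1:ℂ) ⊗ₜ[ℝ] x) = 0 := by rw [h]; rfl
  rw [LinearMap.baseChange_tmul] at this
  simpa using one_tmul_inj this

lemma eig_lemma {A : V →ₗ[ℝ] V} {c : ℝ} {n : ℕ} (hc : c ≠ 0) (μ : ℂ) (hμ : μ^2 = -(c:ℂ))
    (hdim : finrank ℝ V = 4*n)
    (h1 : finrank ℂ (LinearMap.ker ((A.baseChange ℂ) - μ • 1)) = 2*n)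
    (h2 : finrank ℂ (LinearMap.ker ((A.baseChange ℂ) + μ • 1)) = 2*n) :
    A ∘ₗ A = (-c) • LinearMap.id := by
  have hμ0 : μ ≠ 0 := by
    intro h
    apply hc
    have h2 : (c:ℂ) = 0 := by rw [h] at hμ; simpa using hμ.symm
    exact_mod_cast h2
  set Ac := A.baseChange ℂ with hAc
  set E1 := LinearMap.ker (Ac - μ • 1)
  set E2 := LinearMap.ker (Ac + μ • 1)
  have hdisj : E1 ⊓ E2 = ⊥ := by
    rw [Submodule.eq_bot_iff]
    intro x hx
    obtain ⟨hx1, hx2⟩ := Submodule.mem_inf.mp hx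
    have e1 : Ac x = μ • x := by
      have := LinearMap.mem_ker.mp hx1; simp [LinearMap.sub_apply] at this
      linear_combination (norm := module) this
    have e2 : Ac x = -(μ • x) := by
      have := LinearMap.mem_ker.mp hx2; simp [LinearMap.add_apply] at this
      linear_combination (norm := module) this
    have : (2*μ) • x = 0 := by
      have := e1.symm.trans e2
      linear_combination (norm := module) this
    have h2μ : (2*μ) ≠ 0 := by simp [hμ0]
    exact (smul_eq_zero.mp this).resolve_left h2μ
  have hfr : finrank ℂ (ℂ ⊗[ℝ] V) = 4*n := by
    rw [Module.finrank_baseChange, hdim]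
  have htop : E1 ⊔ E2 = ⊤ := by
    apply Submodule.eq_top_of_finrank_eq
    have := Submodule.finrank_sup_add_finrank_inf_eq E1 E2
    rw [hdisj] at this
    simp only [finrank_bot, add_zero] at this
    omega
  have hzero : Ac ∘ₗ Ac + (c:ℂ) • 1 = 0 := by
    apply LinearMap.ext; intro x
    have hx : x ∈ E1 ⊔ E2 := htop.symm ▸ Submodule.mem_top
    obtain ⟨y, hy, z, hz, rfl⟩ := Submodule.mem_sup.mp hx
    have ey : Ac y = μ • y := by
      have := LinearMap.mem_ker.mp hy; simp [LinearMap.sub_apply] at this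
      linear_combination (norm := module) this
    have ez : Ac z = -(μ • z) := by
      have := LinearMap.mem_ker.mp hz; simp [LinearMap.add_apply] at this
      linear_combination (norm := module) this
    have hy2 : Ac (Ac y) = -((c:ℂ) • y) := by
      rw [ey, map_smul, ey, smul_smul, ← pow_two, hμ]
      module
    have hz2 : Ac (Ac z) = -((c:ℂ) • z) := by
      rw [ez, map_neg, map_smul, ez, smul_neg, smul_smul, ← pow_two, hμ]
      module
    simp only [LinearMap.add_apply, LinearMap.comp_apply, LinearMap.zero_apply,
      LinearMap.smul_apply, Module.End.one_apply, map_add, hy2, hz2]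
    module
  have hreal : (A ∘ₗ A + c • LinearMap.id : V →ₗ[ℝ] V) = 0 := by
    apply baseChange_eq_zero
    have : (A ∘ₗ A + c • LinearMap.id : V →ₗ[ℝ] V).baseChange ℂ = Ac ∘ₗ Ac + (c:ℂ) • 1 := by
      rw [LinearMap.baseChange_add, LinearMap.baseChange_smul, LinearMap.baseChange_id,
        LinearMap.baseChange_comp A A,
        ← algebraMap_smul ℂ c (LinearMap.id : ℂ ⊗[ℝ] V →ₗ[ℂ] ℂ ⊗[ℝ] V)]
      rfl
    rw [this, hzero]
  have := hreal
  rw [add_eq_zero_iff_eq_neg] at this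
  rw [this, neg_smul]

lemma key_aniso {Ω : Type*} [AddCommGroup Ω] [Module ℝ Ω]
    {n : ℕ} (hdim : finrank ℝ V = 4 * n)
    (embR : Ω →ₗ[ℝ] LinearMap.BilinForm ℝ V)
    (qR : QuadraticForm ℝ Ω)
    (hdich : ∀ ω₁ ω₂ : Ω, ¬(ω₁ = 0 ∧ ω₂ = 0) →
      ((qR ω₁ - qR ω₂ = 0 ∧ QuadraticMap.polar qR ω₁ ω₂ = 0) →
        finrank ℂ (LinearMap.ker
          (LinearMap.BilinForm.baseChange ℂ (embR ω₁) +
            Complex.I • LinearMap.BilinForm.baseChange ℂ (embR ω₂))) = 2 * n) ∧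
      (¬(qR ω₁ - qR ω₂ = 0 ∧ QuadraticMap.polar qR ω₁ ω₂ = 0) →
        LinearMap.ker
          (LinearMap.BilinForm.baseChange ℂ (embR ω₁) +
            Complex.I • LinearMap.BilinForm.baseChange ℂ (embR ω₂)) = ⊥))
    (ω₁ ω₂ : Ω) (hq1 : qR ω₁ = 1) (hpol : QuadraticMap.polar qR ω₁ ω₂ = 0)
    (hc : qR ω₂ ≠ 0) (hbij : Function.Bijective (embR ω₁)) :
    ((LinearEquiv.ofBijective (embR ω₁) hbij).symm.toLinearMap ∘ₗ embR ω₂) ∘ₗ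
      ((LinearEquiv.ofBijective (embR ω₁) hbij).symm.toLinearMap ∘ₗ embR ω₂) =
      (-(qR ω₂)) • (LinearMap.id : V →ₗ[ℝ] V) := by
  classical
  set c := qR ω₂ with hcdef
  set e := LinearEquiv.ofBijective (embR ω₁) hbij with he
  set A : V →ₗ[ℝ] V := e.symm.toLinearMap ∘ₗ embR ω₂ with hA
  -- ker of base change of B₁ is ⊥
  have hω₁ne : ω₁ ≠ 0 := by
    intro h; rw [h] at hq1; simp at hq1
  have hker1 : LinearMap.ker (LinearMap.BilinForm.baseChange ℂ (embR ω₁)) = ⊥ := by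
    have h0 := (hdich ω₁ 0 (by tauto)).2 (by
      simp [QuadraticMap.polar]
      intro h; exact absurd (hq1 ▸ h) one_ne_zero)
    rwa [map_zero, bc_zero, smul_zero, add_zero] at h0
  -- B₂ = B₁ ∘ A
  have hB2 : embR ω₂ = embR ω₁ ∘ₗ A := by
    apply LinearMap.ext; intro x
    have : embR ω₁ (A x) = e (A x) := rfl
    rw [LinearMap.comp_apply, this, hA]
    simp
  -- the eigenspace finrank claim
  have claim : ∀ lam : ℂ, lam^2 = -(c:ℂ) →
      finrank ℂ (LinearMap.ker ((A.baseChange ℂ) - lam • 1)) = 2*n := by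
    intro lam hlam
    have hlam0 : lam ≠ 0 := by
      intro h; rw [h] at hlam
      apply hc
      have h2 : (c:ℂ) = 0 := by simpa using hlam.symm
      exact_mod_cast h2
    set v : ℂ := -lam⁻¹ with hv
    have hv0 : v ≠ 0 := by simp [hv, hlam0]
    have hv2 : v^2 * c = -1 := by
      have : v^2 = (lam^2)⁻¹ := by rw [hv]; field_simp
      have hcc : (c:ℂ) ≠ 0 := by exact_mod_cast hc
      rw [this, hlam]
      field_simp
    set β : ℝ := v.re
    set δ : ℝ := v.im
    have hvre : (β:ℂ) + (δ:ℂ) * Complex.I = v := Complex.re_add_im v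
    have hexp : ((β:ℂ) + (δ:ℂ)*Complex.I)^2 * (c:ℂ) =
        (((β^2 - δ^2)*c : ℝ) : ℂ) + (((2*β*δ*c : ℝ)):ℂ) * Complex.I := by
      push_cast
      ring_nf
      rw [Complex.I_sq]
      ring
    have hri : (β^2 - δ^2)*c = -1 ∧ 2*β*δ*c = 0 := by
      rw [hvre] at hexp
      rw [hv2] at hexp
      constructor
      · have := congrArg Complex.re hexp.symm
        simpa [← Complex.ofReal_pow] using this
      · have := congrArg Complex.im hexp.symm
        simpa [← Complex.ofReal_pow] using this
    set ωa := ω₁ + β • ω₂ with hωa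
    set ωb := δ • ω₂ with hωb
    have hsm : ∀ (a:ℝ) (x : Ω), qR (a • x) = a^2 * qR x := fun a x => by
      rw [QuadraticMap.map_smul, smul_eq_mul]; ring
    have hps : ∀ x : Ω, QuadraticMap.polar qR x x = 2 * qR x := fun x => by
      rw [QuadraticMap.polar_self, two_smul]; ring
    have hqa : qR ωa = 1 + β^2 * c := by
      have hadd : qR (ω₁ + β • ω₂) = qR ω₁ + qR (β • ω₂) + QuadraticMap.polar qR ω₁ (β • ω₂) := by
        simp only [QuadraticMap.polar]; ring
      rw [hωa, hadd, hq1, hsm, QuadraticMap.polar_smul_right, hpol, smul_zero, add_zero, ← hcdef]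
    have hqb : qR ωb = δ^2 * c := by
      rw [hωb, hsm, ← hcdef]
    have hpolab : QuadraticMap.polar qR ωa ωb = 2*β*δ*c := by
      rw [hωb, QuadraticMap.polar_smul_right, hωa, QuadraticMap.polar_add_left,
        QuadraticMap.polar_smul_left, hpol, hps, ← hcdef]
      simp only [smul_eq_mul, zero_add]; ring
    have hne : ¬(ωa = 0 ∧ ωb = 0) := by
      rintro ⟨ha, -⟩
      have hω₁eq : ω₁ = (-β) • ω₂ := by
        rw [hωa] at ha
        have := eq_neg_of_add_eq_zero_left ha
        rw [this, neg_smul]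
      have hq1' := hq1
      rw [hω₁eq, hsm, ← hcdef] at hq1'
      have hp' := hpol
      rw [hω₁eq, QuadraticMap.polar_smul_left, hps, ← hcdef, smul_eq_mul] at hp'
      have hβ : β = 0 := by
        rcases mul_eq_zero.mp (by linarith : β * (2*c) = 0) with h | h
        · exact h
        · exact absurd (by linarith : c = 0) hc
      rw [hβ] at hq1'
      norm_num at hq1'
    have hfr := (hdich ωa ωb hne).1 ⟨by rw [hqa, hqb]; linear_combination hri.1, hpolab.trans hri.2⟩
    -- rewrite the bilinear form
    have hform : LinearMap.BilinForm.baseChange ℂ (embR ωa) +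
        Complex.I • LinearMap.BilinForm.baseChange ℂ (embR ωb)
        = (LinearMap.BilinForm.baseChange ℂ (embR ω₁)) ∘ₗ (LinearMap.id + v • A.baseChange ℂ) := by
      rw [hωa, hωb, map_add, map_smul, map_smul, bc_add, bc_smul, bc_smul]
      rw [hB2, bc_comp]
      rw [smul_smul]
      apply LinearMap.ext; intro z
      apply LinearMap.ext; intro w
      simp only [LinearMap.add_apply, LinearMap.comp_apply, LinearMap.smul_apply,
        LinearMap.id_apply]
      rw [← hvre]
      push_cast
      ring_nf
      simp [map_add, map_smul]
      ring
    have hkerv : LinearMap.ker (LinearMap.id + v • A.baseChange ℂ)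
        = LinearMap.ker ((A.baseChange ℂ) - lam • 1) := by
      have heq : LinearMap.id + v • A.baseChange ℂ = v • ((A.baseChange ℂ) - lam • 1) := by
        rw [smul_sub, smul_smul, hv]
        rw [show -lam⁻¹ * lam = -1 by field_simp]
        apply LinearMap.ext; intro z
        simp only [LinearMap.add_apply, LinearMap.sub_apply, LinearMap.smul_apply,
          LinearMap.id_apply, Module.End.one_apply]
        module
      rw [heq, LinearMap.ker_smul _ _ hv0]
    rw [hform] at hfr
    rw [LinearMap.ker_comp, hker1, Submodule.comap_bot, hkerv] at hfr
    exact hfr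
  -- apply the eigenvalue lemma
  obtain ⟨μ, hμ⟩ := IsAlgClosed.exists_pow_nat_eq (-(c:ℂ)) zero_lt_two
  have h1 := claim μ hμ
  have h2 := claim (-μ) (by rw [neg_pow]; simpa using hμ)
  have h2' : finrank ℂ (LinearMap.ker ((A.baseChange ℂ) + μ • 1)) = 2*n := by
    have heq2 : (A.baseChange ℂ) - (-μ) • 1 = (A.baseChange ℂ) + μ • 1 := by
      apply LinearMap.ext; intro z
      simp only [LinearMap.sub_apply, LinearMap.add_apply, LinearMap.smul_apply,
        Module.End.one_apply]
      module
    rwa [heq2] at h2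
  exact eig_lemma hc μ hμ hdim h1 h2'
lemma smul_cancel {M : Type*} [AddCommGroup M] [Module ℝ M] {t : ℝ} (h : t ≠ 0) {x : M}
    (hx : t • x = 0) : x = 0 := by
  have := congrArg (fun y => t⁻¹ • y) hx
  simpa [smul_smul, inv_mul_cancel₀ h] using this

lemma vand3 {M : Type*} [AddCommGroup M] [Module ℝ M] {a b c : M} {t₁ t₂ t₃ : ℝ}
    (h12 : t₁ ≠ t₂) (h13 : t₁ ≠ t₃) (h23 : t₂ ≠ t₃)
    (e₁ : a + t₁ • b + (t₁*t₁) • c = 0) (e₂ : a + t₂ • b + (t₂*t₂) • c = 0)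
    (e₃ : a + t₃ • b + (t₃*t₃) • c = 0) : a = 0 ∧ b = 0 ∧ c = 0 := by
  have d12 : (t₁ - t₂) • (b + (t₁+t₂) • c) = 0 := by
    linear_combination (norm := module) e₁ - e₂
  have d23 : (t₂ - t₃) • (b + (t₂+t₃) • c) = 0 := by
    linear_combination (norm := module) e₂ - e₃
  have f12 : b + (t₁+t₂) • c = 0 := smul_cancel (sub_ne_zero.mpr h12) d12
  have f23 : b + (t₂+t₃) • c = 0 := smul_cancel (sub_ne_zero.mpr h23) d23
  have dc : (t₁ - t₃) • c = 0 := by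
    linear_combination (norm := module) f12 - f23
  have hcz : c = 0 := smul_cancel (sub_ne_zero.mpr h13) dc
  have hbz : b = 0 := by
    have := f12
    rw [hcz, smul_zero, add_zero] at this
    exact this
  refine ⟨?_, hbz, hcz⟩
  have := e₁
  rw [hbz, hcz, smul_zero, smul_zero, add_zero, add_zero] at this
  exact this

lemma exists_three_nonroots {c₀ p q : ℝ} (hq : q ≠ 0) :
    ∃ t₁ t₂ t₃ : ℝ, t₁ ≠ t₂ ∧ t₁ ≠ t₃ ∧ t₂ ≠ t₃ ∧
      (c₀ + t₁ • p + (t₁*t₁) • q ≠ 0) ∧ (c₀ + t₂ • p + (t₂*t₂) • q ≠ 0) ∧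
      (c₀ + t₃ • p + (t₃*t₃) • q ≠ 0) := by
  classical
  set S : Finset ℝ := {0, 1, 2, 3, 4} with hS
  have hcardS : S.card = 5 := by
    rw [hS]; norm_num
  set R : Finset ℝ := S.filter (fun t => c₀ + t • p + (t*t) • q = 0) with hR
  have hcardR : R.card ≤ 2 := by
    by_contra hlt
    push_neg at hlt
    obtain ⟨a, b, c, ha, hb, hc, hab, hac, hbc⟩ := Finset.two_lt_card_iff.mp hlt
    have ra := (Finset.mem_filter.mp ha).2
    have rb := (Finset.mem_filter.mp hb).2
    have rc := (Finset.mem_filter.mp hc).2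
    have := vand3 hab hac hbc ra rb rc
    exact hq this.2.2
  have hT : 3 ≤ (S \ R).card := by
    have := Finset.le_card_sdiff R S
    omega
  obtain ⟨t₁, t₂, t₃, h1, h2, h3, h12, h13, h23⟩ := Finset.two_lt_card_iff.mp (show 2 < (S \ R).card by omega)
  refine ⟨t₁, t₂, t₃, h12, h13, h23, ?_, ?_, ?_⟩ <;>
  · intro hzero
    first
    | exact (Finset.mem_sdiff.mp h1).2 (Finset.mem_filter.mpr ⟨(Finset.mem_sdiff.mp h1).1, hzero⟩)
    | exact (Finset.mem_sdiff.mp h2).2 (Finset.mem_filter.mpr ⟨(Finset.mem_sdiff.mp h2).1, hzero⟩)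
    | exact (Finset.mem_sdiff.mp h3).2 (Finset.mem_filter.mpr ⟨(Finset.mem_sdiff.mp h3).1, hzero⟩)

lemma signQF_apply (r s : ℕ) (v : Fin (r+s) → ℝ) :
    signQF r s v = ∑ i : Fin (r+s), (if (i : ℕ) < r then (-1 : ℝ) else 1) * (v i * v i) := by
  rw [signQF, QuadraticMap.weightedSumSquares_apply]
  simp [smul_eq_mul]

lemma signQF_polar (r s : ℕ) (x y : Fin (r+s) → ℝ) :
    QuadraticMap.polar (signQF r s) x y
      = ∑ i : Fin (r+s), (if (i : ℕ) < r then (-1 : ℝ) else 1) * (2 * x i * y i) := by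
  rw [QuadraticMap.polar, signQF_apply, signQF_apply, signQF_apply,
    ← Finset.sum_sub_distrib, ← Finset.sum_sub_distrib]
  apply Finset.sum_congr rfl
  intro i _
  simp only [Pi.add_apply]
  ring

lemma qR_nondeg {Ω : Type*} [AddCommGroup Ω] [Module ℝ Ω] {qR : QuadraticForm ℝ Ω} {r s : ℕ}
    (f : QuadraticMap.IsometryEquiv qR (signQF r s)) :
    ∀ w, (∀ u, QuadraticMap.polar qR w u = 0) → w = 0 := by
  intro w hw
  have htrans : ∀ u, QuadraticMap.polar qR w u
      = QuadraticMap.polar (signQF r s) (f w) (f u) := by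
    intro u
    simp only [QuadraticMap.polar, f.map_app]
    congr 2
    rw [← f.map_app]
    congr 1
    exact map_add f w u
  have hx : ∀ i, f w i = 0 := by
    intro i
    have h0 := hw (f.toLinearEquiv.symm (Pi.single i 1))
    rw [htrans] at h0
    have hfy : f (f.toLinearEquiv.symm (Pi.single i 1)) = Pi.single i 1 :=
      f.toLinearEquiv.apply_symm_apply _
    rw [hfy, signQF_polar] at h0
    rw [Finset.sum_eq_single i] at h0
    · simp only [Pi.single_eq_same] at h0
      rcases lt_or_ge (i:ℕ) r with h | h
      · rw [if_pos h] at h0; linarith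
      · rw [if_neg (not_lt.mpr h)] at h0; linarith
    · intro j _ hji
      rw [Pi.single_eq_of_ne hji]
      ring
    · intro h; exact absurd (Finset.mem_univ i) h
  have : f w = 0 := funext hx
  have h0 : f w = f 0 := by rw [this, map_zero f]
  exact f.toLinearEquiv.injective h0

lemma key_general {V : Type*} [AddCommGroup V] [Module ℝ V] [FiniteDimensional ℝ V]
    {Ω : Type*} [AddCommGroup Ω] [Module ℝ Ω]
    {n : ℕ} (hdim : finrank ℝ V = 4 * n)
    (embR : Ω →ₗ[ℝ] LinearMap.BilinForm ℝ V)
    (qR : QuadraticForm ℝ Ω)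
    (hnd : ∀ w : Ω, (∀ u, QuadraticMap.polar qR w u = 0) → w = 0)
    (hdich : ∀ ω₁ ω₂ : Ω, ¬(ω₁ = 0 ∧ ω₂ = 0) →
      ((qR ω₁ - qR ω₂ = 0 ∧ QuadraticMap.polar qR ω₁ ω₂ = 0) →
        finrank ℂ (LinearMap.ker
          (LinearMap.BilinForm.baseChange ℂ (embR ω₁) +
            Complex.I • LinearMap.BilinForm.baseChange ℂ (embR ω₂))) = 2 * n) ∧
      (¬(qR ω₁ - qR ω₂ = 0 ∧ QuadraticMap.polar qR ω₁ ω₂ = 0) →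
        LinearMap.ker
          (LinearMap.BilinForm.baseChange ℂ (embR ω₁) +
            Complex.I • LinearMap.BilinForm.baseChange ℂ (embR ω₂)) = ⊥))
    (ω₁ ω₂ : Ω) (hq1 : qR ω₁ = 1) (hpol : QuadraticMap.polar qR ω₁ ω₂ = 0)
    (hbij : Function.Bijective (embR ω₁)) :
    ((LinearEquiv.ofBijective (embR ω₁) hbij).symm.toLinearMap ∘ₗ embR ω₂) ∘ₗ
      ((LinearEquiv.ofBijective (embR ω₁) hbij).symm.toLinearMap ∘ₗ embR ω₂) =
      (-(qR ω₂)) • (LinearMap.id : V →ₗ[ℝ] V) := by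
  classical
  set e := LinearEquiv.ofBijective (embR ω₁) hbij with he
  by_cases hex : ∃ ω' : Ω, QuadraticMap.polar qR ω₁ ω' = 0 ∧ qR ω' ≠ 0
  · obtain ⟨ω', hpol', hq'⟩ := hex
    set c₀ := qR ω₂ with hc₀
    set p := QuadraticMap.polar qR ω₂ ω' with hp
    set q := qR ω' with hqdef
    obtain ⟨t₁, t₂, t₃, h12, h13, h23, hnr₁, hnr₂, hnr₃⟩ := exists_three_nonroots (c₀ := c₀) (p := p) hq'
    set X : V →ₗ[ℝ] V := e.symm.toLinearMap ∘ₗ embR ω₂ with hX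
    set Y : V →ₗ[ℝ] V := e.symm.toLinearMap ∘ₗ embR ω' with hY
    have main : ∀ t : ℝ, c₀ + t • p + (t*t) • q ≠ 0 →
        (X ∘ₗ X + c₀ • LinearMap.id) + t • (X ∘ₗ Y + Y ∘ₗ X + p • LinearMap.id)
          + (t*t) • (Y ∘ₗ Y + q • LinearMap.id) = 0 := by
      intro t hnr
      set ωt := ω₂ + t • ω' with hωt
      have hpolt : QuadraticMap.polar qR ω₁ ωt = 0 := by
        rw [hωt, QuadraticMap.polar_add_right, QuadraticMap.polar_smul_right, hpol, hpol']
        simp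
      have hqt : qR ωt = c₀ + t * p + (t*t) * q := by
        rw [hωt]
        have hadd : qR (ω₂ + t • ω') = qR ω₂ + qR (t • ω') + QuadraticMap.polar qR ω₂ (t • ω') := by
          simp only [QuadraticMap.polar]; ring
        rw [hadd, QuadraticMap.map_smul, QuadraticMap.polar_smul_right, ← hp, ← hqdef]
        simp only [smul_eq_mul]
        ring
      have hqtne : qR ωt ≠ 0 := by
        rw [hqt]; simpa [smul_eq_mul] using hnr
      have hkey := key_aniso hdim embR qR hdich ω₁ ωt hq1 hpolt hqtne hbij
      have hAt : e.symm.toLinearMap ∘ₗ embR ωt = X + t • Y := by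
        rw [hωt, map_add, map_smul, hX, hY]
        apply LinearMap.ext; intro x
        simp
      rw [hAt] at hkey
      have hexpand : (X + t • Y) ∘ₗ (X + t • Y)
          = X ∘ₗ X + t • (X ∘ₗ Y + Y ∘ₗ X) + (t*t) • (Y ∘ₗ Y) := by
        simp only [LinearMap.add_comp, LinearMap.comp_add, LinearMap.smul_comp,
          LinearMap.comp_smul, smul_smul]
        apply LinearMap.ext; intro x
        simp only [LinearMap.add_apply, LinearMap.smul_apply]
        module
      rw [hexpand] at hkey
      rw [hqt] at hkey
      linear_combination (norm := module) hkey
    have e₁ := main t₁ hnr₁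
    have e₂ := main t₂ hnr₂
    have e₃ := main t₃ hnr₃
    have := (vand3 h12 h13 h23 e₁ e₂ e₃).1
    have hgoal : X ∘ₗ X = -(c₀ • LinearMap.id : V →ₗ[ℝ] V) := by
      rw [add_eq_zero_iff_eq_neg] at this
      exact this
    rw [hX] at hgoal
    rw [hgoal, neg_smul]
  · push_neg at hex
    have hω₂0 : ω₂ = 0 := by
      apply hnd
      intro u
      set α := QuadraticMap.polar qR ω₁ u / 2 with hα
      set u' := u - α • ω₁ with hu'
      have hps : ∀ x : Ω, QuadraticMap.polar qR x x = 2 * qR x := fun x => by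
        rw [QuadraticMap.polar_self, two_smul]; ring
      have hpu' : QuadraticMap.polar qR ω₁ u' = 0 := by
        rw [hu', QuadraticMap.polar_sub_right, QuadraticMap.polar_smul_right, hps, hq1, hα]
        simp only [smul_eq_mul]
        ring
      have q2 : qR ω₂ = 0 := hex ω₂ hpol
      have qu' : qR u' = 0 := hex u' hpu'
      have qsum : qR (ω₂ + u') = 0 := by
        apply hex
        rw [QuadraticMap.polar_add_right, hpol, hpu', add_zero]
      have hu : u = α • ω₁ + u' := by rw [hu']; abel
      rw [hu, QuadraticMap.polar_add_right, QuadraticMap.polar_smul_right]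
      have hc : QuadraticMap.polar qR ω₂ ω₁ = 0 := by
        rw [QuadraticMap.polar_comm]; exact hpol
      have hpu'2 : QuadraticMap.polar qR ω₂ u' = 0 := by
        simp only [QuadraticMap.polar, qsum, q2, qu']
        ring
      rw [hc, hpu'2, smul_zero, add_zero]
    rw [hω₂0, map_zero]
    have : qR (0 : Ω) = 0 := by simp
    rw [this]
    apply LinearMap.ext; intro x
    simp
noncomputable def Tlin (r s : ℕ) : (Fin ((s-1)+r) → ℝ) →ₗ[ℝ] (Fin (r+s) → ℝ) :=
  LinearMap.pi (fun i =>
    if h : (i:ℕ) < r then LinearMap.proj (⟨(s-1)+(i:ℕ), by omega⟩ : Fin ((s-1)+r))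
    else if h2 : (i:ℕ) < r+s-1 then LinearMap.proj (⟨(i:ℕ)-r, by omega⟩ : Fin ((s-1)+r))
    else 0)

lemma Tlin_lt (r s : ℕ) (w : Fin ((s-1)+r) → ℝ) (i : Fin (r+s)) (h : (i:ℕ) < r) :
    Tlin r s w i = w ⟨(s-1)+(i:ℕ), by omega⟩ := by
  rw [Tlin, LinearMap.pi_apply, dif_pos h, LinearMap.proj_apply]

lemma Tlin_mid (r s : ℕ) (w : Fin ((s-1)+r) → ℝ) (i : Fin (r+s)) (h : ¬ (i:ℕ) < r)
    (h2 : (i:ℕ) < r+s-1) :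
    Tlin r s w i = w ⟨(i:ℕ)-r, by omega⟩ := by
  rw [Tlin, LinearMap.pi_apply, dif_neg h, dif_pos h2, LinearMap.proj_apply]

lemma Tlin_last (r s : ℕ) (w : Fin ((s-1)+r) → ℝ) (i : Fin (r+s)) (h : ¬ (i:ℕ) < r)
    (h2 : ¬ (i:ℕ) < r+s-1) :
    Tlin r s w i = 0 := by
  rw [Tlin, LinearMap.pi_apply, dif_neg h, dif_neg h2]
  rfl

lemma q_single (r s : ℕ) (hs : 0 < s) (i₀ : Fin (r+s)) (hi₀ : (i₀:ℕ) = r+s-1) :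
    signQF r s (Pi.single i₀ 1) = 1 := by
  rw [signQF_apply, Finset.sum_eq_single i₀]
  · rw [Pi.single_eq_same, if_neg (by omega)]
    norm_num
  · intro j _ hji
    rw [Pi.single_eq_of_ne hji]
    ring
  · intro h; exact absurd (Finset.mem_univ i₀) h

lemma polar_sum (r s : ℕ) (hs : 0 < s) (i₀ : Fin (r+s)) (hi₀ : (i₀:ℕ) = r+s-1)
    (w : Fin ((s-1)+r) → ℝ) :
    QuadraticMap.polar (signQF r s) (Pi.single i₀ 1) (Tlin r s w) = 0 := by
  rw [signQF_polar, Finset.sum_eq_single i₀]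
  · rw [Pi.single_eq_same, Tlin_last r s w i₀ (by omega) (by omega)]
    ring
  · intro j _ hji
    rw [Pi.single_eq_of_ne hji]
    ring
  · intro h; exact absurd (Finset.mem_univ i₀) h

lemma signQF_Tlin (r s : ℕ) (hs : 0 < s) (w : Fin ((s-1)+r) → ℝ) :
    signQF r s (Tlin r s w) = - signQF (s-1) r w := by
  classical
  set G : ℕ → ℝ := fun m =>
    if h : m < r then w ⟨(s-1)+m, by omega⟩
    else if h2 : m < r+s-1 then w ⟨m-r, by omega⟩
    else 0 with hG
  set F : ℕ → ℝ := fun m => (if m < r then (-1:ℝ) else 1) * (G m * G m) with hF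
  set H : ℕ → ℝ := fun j =>
    if h : j < (s-1)+r then (if j < s-1 then (-1:ℝ) else 1) * (w ⟨j,h⟩ * w ⟨j,h⟩) else 0 with hH
  have hLHS : signQF r s (Tlin r s w) = ∑ m ∈ Finset.range (r+s), F m := by
    rw [signQF_apply, ← Fin.sum_univ_eq_sum_range F (r+s)]
    apply Finset.sum_congr rfl
    intro i _
    rw [hF]
    congr 1
    by_cases h : (i:ℕ) < r
    · rw [Tlin_lt r s w i h, hG]
      simp only [dif_pos h]
    · by_cases h2 : (i:ℕ) < r+s-1
      · rw [Tlin_mid r s w i h h2, hG]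
        simp only [dif_neg h, dif_pos h2]
      · rw [Tlin_last r s w i h h2, hG]
        simp only [dif_neg h, dif_neg h2]
  have hRHS : signQF (s-1) r w = ∑ j ∈ Finset.range ((s-1)+r), H j := by
    rw [signQF_apply, ← Fin.sum_univ_eq_sum_range H ((s-1)+r)]
    apply Finset.sum_congr rfl
    intro j _
    rw [hH]
    simp only [dif_pos j.isLt]
  rw [hLHS, hRHS, Finset.sum_range_add F r s, Finset.sum_range_add H (s-1) r]
  have h1 : ∑ m ∈ Finset.range r, F m = - ∑ j ∈ Finset.range r, H ((s-1)+j) := by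
    rw [← Finset.sum_neg_distrib]
    apply Finset.sum_congr rfl
    intro m hm
    have hmr : m < r := Finset.mem_range.mp hm
    rw [hF, hG, hH]
    simp only [if_pos hmr, dif_pos hmr, dif_pos (show (s-1)+m < (s-1)+r by omega),
      if_neg (show ¬ (s-1)+m < s-1 by omega)]
    ring
  have h2 : ∑ m ∈ Finset.range s, F (r+m) = - ∑ j ∈ Finset.range (s-1), H j := by
    have hsub : ∑ m ∈ Finset.range s, F (r+m) = ∑ m ∈ Finset.range (s-1), F (r+m) := by
      rw [eq_comm]
      apply Finset.sum_subset (Finset.range_subset_range.mpr (by omega))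
      intro m hm hnm
      have hm1 : m < s := Finset.mem_range.mp hm
      have hm2 : ¬ m < s - 1 := fun hc => hnm (Finset.mem_range.mpr hc)
      rw [hF, hG]
      simp only [dif_neg (show ¬ r+m < r by omega), dif_neg (show ¬ r+m < r+s-1 by omega)]
      ring
    rw [hsub, ← Finset.sum_neg_distrib]
    apply Finset.sum_congr rfl
    intro m hm
    have hms : m < s-1 := Finset.mem_range.mp hm
    rw [hF, hG, hH]
    simp only [dif_neg (show ¬ r+m < r by omega), dif_pos (show r+m < r+s-1 by omega),
      dif_pos (show m < (s-1)+r by omega), if_pos hms, if_neg (show ¬ r+m < r by omega),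
      show r+m-r = m by omega]
    ring
  rw [h1, h2]
  ring

lemma polar_transfer {Ω : Type*} [AddCommGroup Ω] [Module ℝ Ω] {qR : QuadraticForm ℝ Ω}
    {r s : ℕ} (f : QuadraticMap.IsometryEquiv qR (signQF r s)) (a b : Ω) :
    QuadraticMap.polar qR a b = QuadraticMap.polar (signQF r s) (f a) (f b) := by
  simp only [QuadraticMap.polar, f.map_app]
  congr 2
  rw [← f.map_app]
  congr 1
  exact map_add f a b


end AuxStmt16

/-- for a real `k`-symplectic vector space `(V, Ω, q)` with `q` of
signature `(r,s)`, `s > 0`: choosing a real `ω₁` with `q ω₁ = 1`, the operator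
`A = ω₁⁻¹ω₂` (for `ω₂ ⊥ ω₁`) satisfies `A² = -q(ω₂)·Id`, and `V_ℝ` becomes a
(nontrivial, unital) module over `Cl_{s-1,r}`. -/
theorem stmt16 (VR : Type*) [AddCommGroup VR] [Module ℝ VR] [FiniteDimensional ℝ VR]
    (ΩR : Type*) [AddCommGroup ΩR] [Module ℝ ΩR] [FiniteDimensional ℝ ΩR]
    (n k r s : ℕ) (hn : 0 < n) (hs : 0 < s) (hrs : r + s = k)
    (hdim : finrank ℝ VR = 4 * n)
    (embR : ΩR →ₗ[ℝ] LinearMap.BilinForm ℝ VR) (hemb : Function.Injective embR)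
    (halt : ∀ ω : ΩR, (embR ω).IsAlt)
    (hk : finrank ℝ ΩR = k)
    (qR : QuadraticForm ℝ ΩR)
    (hsig : Nonempty (QuadraticMap.IsometryEquiv qR (signQF r s)))
    (hdich : ∀ ω₁ ω₂ : ΩR, ¬(ω₁ = 0 ∧ ω₂ = 0) →
      ((qR ω₁ - qR ω₂ = 0 ∧ QuadraticMap.polar qR ω₁ ω₂ = 0) →
        finrank ℂ (LinearMap.ker
          (LinearMap.BilinForm.baseChange ℂ (embR ω₁) +
            Complex.I • LinearMap.BilinForm.baseChange ℂ (embR ω₂))) = 2 * n) ∧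
      (¬(qR ω₁ - qR ω₂ = 0 ∧ QuadraticMap.polar qR ω₁ ω₂ = 0) →
        LinearMap.ker
          (LinearMap.BilinForm.baseChange ℂ (embR ω₁) +
            Complex.I • LinearMap.BilinForm.baseChange ℂ (embR ω₂)) = ⊥)) :
    (∀ ω₁ ω₂ : ΩR, qR ω₁ = 1 → QuadraticMap.polar qR ω₁ ω₂ = 0 →
      ∀ hbij : Function.Bijective (embR ω₁),
        ((LinearEquiv.ofBijective (embR ω₁) hbij).symm.toLinearMap ∘ₗ embR ω₂) ∘ₗ
          ((LinearEquiv.ofBijective (embR ω₁) hbij).symm.toLinearMap ∘ₗ embR ω₂) =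
          (-(qR ω₂)) • (LinearMap.id : VR →ₗ[ℝ] VR)) ∧
    Nonempty (CliffordRS (s - 1) r →ₐ[ℝ] Module.End ℝ VR) := by
  obtain ⟨f⟩ := hsig
  have hnd := qR_nondeg f
  have part1 : (∀ ω₁ ω₂ : ΩR, qR ω₁ = 1 → QuadraticMap.polar qR ω₁ ω₂ = 0 →
      ∀ hbij : Function.Bijective (embR ω₁),
        ((LinearEquiv.ofBijective (embR ω₁) hbij).symm.toLinearMap ∘ₗ embR ω₂) ∘ₗ
          ((LinearEquiv.ofBijective (embR ω₁) hbij).symm.toLinearMap ∘ₗ embR ω₂) =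
          (-(qR ω₂)) • (LinearMap.id : VR →ₗ[ℝ] VR)) := by
    intro ω₁ ω₂ hq1 hpol hbij
    exact key_general hdim embR qR hnd hdich ω₁ ω₂ hq1 hpol hbij
  refine ⟨part1, ?_⟩
  set i₀ : Fin (r+s) := ⟨r+s-1, by omega⟩ with hi₀def
  have hi₀ : (i₀:ℕ) = r+s-1 := rfl
  set ω₁ : ΩR := f.toLinearEquiv.symm (Pi.single i₀ 1) with hω₁
  have hfω₁ : f ω₁ = Pi.single i₀ 1 := f.toLinearEquiv.apply_symm_apply _
  have hq1 : qR ω₁ = 1 := by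
    rw [← f.map_app ω₁, hfω₁]
    exact q_single r s hs i₀ hi₀
  have hbij : Function.Bijective (embR ω₁) := by
    have hω₁ne : ω₁ ≠ 0 := fun h => by rw [h] at hq1; simp at hq1
    have h0 := (hdich ω₁ 0 (by tauto)).2 (by
      simp only [QuadraticMap.polar]
      intro h
      exact absurd (hq1 ▸ h.1) (by simp))
    rw [map_zero, bc_zero, smul_zero, add_zero] at h0
    exact bij_of_bc_ker h0
  set e := LinearEquiv.ofBijective (embR ω₁) hbij with he
  set Tmap : (Fin ((s-1)+r) → ℝ) →ₗ[ℝ] ΩR :=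
    f.toLinearEquiv.symm.toLinearMap ∘ₗ Tlin r s with hTmap
  set Amap : ΩR →ₗ[ℝ] (VR →ₗ[ℝ] VR) :=
    (LinearMap.llcomp ℝ VR (VR →ₗ[ℝ] ℝ) VR e.symm.toLinearMap) ∘ₗ embR with hAmap
  set flin : (Fin ((s-1)+r) → ℝ) →ₗ[ℝ] Module.End ℝ VR := Amap ∘ₗ Tmap with hflin
  have hf : ∀ m, flin m * flin m = algebraMap ℝ (Module.End ℝ VR) (signQF (s-1) r m) := by
    intro m
    have hfT : f (Tmap m) = Tlin r s m := by
      rw [hTmap, LinearMap.comp_apply]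
      exact f.toLinearEquiv.apply_symm_apply _
    have hpolm : QuadraticMap.polar qR ω₁ (Tmap m) = 0 := by
      rw [polar_transfer f, hfω₁, hfT]
      exact polar_sum r s hs i₀ hi₀ m
    have hqm : qR (Tmap m) = - signQF (s-1) r m := by
      rw [← f.map_app (Tmap m), hfT]
      exact signQF_Tlin r s hs m
    have hk := part1 ω₁ (Tmap m) hq1 hpolm hbij
    have hfm : flin m = e.symm.toLinearMap ∘ₗ embR (Tmap m) := rfl
    rw [hfm]
    rw [show (e.symm.toLinearMap ∘ₗ embR (Tmap m)) * (e.symm.toLinearMap ∘ₗ embR (Tmap m))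
      = (e.symm.toLinearMap ∘ₗ embR (Tmap m)) ∘ₗ (e.symm.toLinearMap ∘ₗ embR (Tmap m)) from rfl]
    rw [hk, hqm, Module.algebraMap_end_eq_smul_id, neg_neg]
  exact ⟨(CliffordAlgebra.lift (signQF (s-1) r)) ⟨flin, hf⟩⟩
end
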